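/- arXiv:1611.04950 — 7 statements merged into one kernel-verified Lean document; each statement's English description precedes it below -/
import Mathlib

section
/- Let A be an N×N Hermitian matrix with eigenvalues λ⁽⁰⁾ ≥ ⋯ ≥ λ⁽ᴺ⁻¹⁾. Suppose A = UU* + L + E where U is an N×K matrix with orthonormal columns, L is Hermitian with rank(L) = r, and E is Hermitian with ‖E‖ ≤ ε. Then the number of indices ℓ with ε < λ⁽ℓ⁾ < 1 − ε is at most 2r. -/
/-!
Put `X = range U ⊓ ker L` and `Y = ker Uᴴ ⊓ ker L`, of dimensions at least `K - r` and
`N - K - r`. On `X` the matrix `A` acts as `1 + E` and on `Y` as `E`, so its quadratic form is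
at least `(1 - ε)‖x‖²` on `X` and at most `ε‖x‖²` on `Y`. Hence the span of the eigenvectors with
eigenvalue below `1 - ε` meets `X` trivially, so there are at most `N - K + r` of them; likewise at
most `K + r` eigenvalues exceed `ε`. If `ε < 1 - ε`, every eigenvalue lies in one of these two
groups, so at most `(N - K + r) + (K + r) - N = 2r` lie in both.
-/

open Matrix
/-- The ℓ2 → ℓ2 operator (spectral) norm of a matrix. -/
noncomputable def opNorm {𝕜 : Type*} [RCLike 𝕜] {m n : ℕ} (M : Matrix (Fin m) (Fin n) 𝕜) : ℝ :=
  ‖LinearMap.toContinuousLinearMap (Matrix.toEuclideanLin M)‖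

open Module Finset

theorem Submodule.finrank_add_finrank_le_finrank_inf_add_finrank {K V : Type*} [DivisionRing K]
    [AddCommGroup V] [Module K V] [FiniteDimensional K V] (s t : Submodule K V) :
    finrank K s + finrank K t ≤ finrank K ↥(s ⊓ t) + finrank K V := by
  rw [← finrank_sup_add_finrank_inf_eq, add_comm (finrank K ↥(s ⊔ t))]
  exact Nat.add_le_add_left (finrank_le _) _

theorem LinearMap.finrank_iInf_ker_proj {K n : Type*} [DivisionRing K] [Fintype n] (s : Set n)
    [DecidablePred (· ∈ sᶜ)] :
    finrank K ↥(⨅ i ∈ s, LinearMap.ker (LinearMap.proj i : (n → K) →ₗ[K] K)) =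
      Fintype.card ↥sᶜ := by
  rw [(LinearMap.iInfKerProjEquiv K (fun _ : n => K) disjoint_compl_left
    (by simp)).finrank_eq, finrank_fintype_fun_eq_card]

theorem Finset.card_filter_and_add_card {α : Type*} [Fintype α] {p q : α → Prop}
    [DecidablePred p] [DecidablePred q] (h : ∀ a, p a ∨ q a) :
    #{a | p a ∧ q a} + Fintype.card α = #{a | p a} + #{a | q a} := by
  classical
  rw [← card_union_add_card_inter, filter_and, add_comm, ← filter_or,
    filter_true_of_mem fun a _ => h a, card_univ]

theorem sum_mul_norm_sq_lt_mul_sum_norm_sq {n E : Type*} [Fintype n] [NormedAddCommGroup E]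
    {μ : n → ℝ} {c : ℝ} {y : n → E} (hy : y ≠ 0) (hsupp : ∀ i, c ≤ μ i → y i = 0) :
    ∑ i, μ i * ‖y i‖ ^ 2 < c * ∑ i, ‖y i‖ ^ 2 := by
  obtain ⟨i₀, hi₀⟩ := Function.ne_iff.mp hy
  rw [mul_sum]
  refine sum_lt_sum (fun i _ => ?_) ⟨i₀, mem_univ _, ?_⟩
  · rcases lt_or_ge (μ i) c with h | h
    · exact mul_le_mul_of_nonneg_right h.le (by positivity)
    · simp [hsupp i h]
  · have h := lt_of_not_ge (mt (hsupp i₀) hi₀)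
    exact mul_lt_mul_of_pos_right h (by positivity)

namespace Matrix

section

variable {𝕜 m n : Type*} [RCLike 𝕜] [Fintype m] [Fintype n]

theorem finrank_range_mulVecLin_of_mul_eq_one [DecidableEq n] {B : Matrix n m 𝕜}
    {C : Matrix m n 𝕜} (h : B * C = 1) :
    finrank 𝕜 (LinearMap.range C.mulVecLin) = Fintype.card n := by
  have : Function.LeftInverse B.mulVecLin C.mulVecLin := fun y => by
    simp [mulVec_mulVec, h]
  rw [LinearMap.finrank_range_of_inj this.injective, finrank_fintype_fun_eq_card]

theorem finrank_ker_mulVecLin_add_of_mul_eq_one [DecidableEq n] {B : Matrix n m 𝕜}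
    {C : Matrix m n 𝕜} (h : B * C = 1) :
    finrank 𝕜 (LinearMap.ker B.mulVecLin) + Fintype.card n = Fintype.card m := by
  have hsurj : LinearMap.range B.mulVecLin = ⊤ :=
    LinearMap.range_eq_top.mpr fun y => ⟨C *ᵥ y, by simp [mulVec_mulVec, h]⟩
  have := B.mulVecLin.finrank_range_add_finrank_ker
  rw [hsurj, finrank_top, finrank_fintype_fun_eq_card, finrank_fintype_fun_eq_card] at this
  omega

omit [Fintype m] in
theorem rank_add_finrank_ker_mulVecLin (A : Matrix m n 𝕜) :
    A.rank + finrank 𝕜 (LinearMap.ker A.mulVecLin) = Fintype.card n := by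
  rw [rank, LinearMap.finrank_range_add_finrank_ker, finrank_fintype_fun_eq_card]

theorem mul_conjTranspose_add_mulVec_eq_self [DecidableEq m] {U : Matrix n m 𝕜}
    (hU : Uᴴ * U = 1) {L : Matrix n n 𝕜} {x : n → 𝕜} (hx : x ∈ LinearMap.range U.mulVecLin)
    (hLx : L *ᵥ x = 0) : (U * Uᴴ + L) *ᵥ x = x := by
  obtain ⟨y, rfl⟩ := hx
  simp only [mulVecLin_apply] at hLx ⊢
  rw [add_mulVec, hLx, add_zero, mulVec_mulVec, Matrix.mul_assoc, hU, Matrix.mul_one]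

theorem mul_conjTranspose_add_mulVec_eq_zero (U : Matrix n m 𝕜)
    {L : Matrix n n 𝕜} {x : n → 𝕜} (hUx : Uᴴ *ᵥ x = 0) (hLx : L *ᵥ x = 0) :
    (U * Uᴴ + L) *ᵥ x = 0 := by
  rw [add_mulVec, hLx, add_zero, ← mulVec_mulVec, hUx, mulVec_zero]

theorem re_star_dotProduct_self (y : n → 𝕜) :
    RCLike.re (star y ⬝ᵥ y) = ∑ i, ‖y i‖ ^ 2 := by
  simp only [dotProduct, Pi.star_apply, RCLike.star_def, RCLike.conj_mul, map_sum]
  norm_cast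

theorem re_star_dotProduct_diagonal_mulVec [DecidableEq n] (μ : n → ℝ) (y : n → 𝕜) :
    RCLike.re (star y ⬝ᵥ (diagonal (fun i => (μ i : 𝕜)) *ᵥ y)) = ∑ i, μ i * ‖y i‖ ^ 2 := by
  simp only [dotProduct, mulVec_diagonal, Pi.star_apply, RCLike.star_def,
    mul_left_comm _ (μ _ : 𝕜), RCLike.conj_mul, map_sum]
  norm_cast

theorem star_mulVec_dotProduct_mulVec_mulVec (V M : Matrix n n 𝕜) (y : n → 𝕜) :
    star (V *ᵥ y) ⬝ᵥ (M *ᵥ (V *ᵥ y)) = star y ⬝ᵥ ((Vᴴ * M * V) *ᵥ y) := by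
  rw [star_mulVec, ← dotProduct_mulVec, mulVec_mulVec, mulVec_mulVec, Matrix.mul_assoc]

theorem star_mulVec_dotProduct_mulVec_self [DecidableEq n] {V : Matrix n n 𝕜} (hV : Vᴴ * V = 1)
    (y : n → 𝕜) : star (V *ᵥ y) ⬝ᵥ (V *ᵥ y) = star y ⬝ᵥ y := by
  rw [star_mulVec, ← dotProduct_mulVec, mulVec_mulVec, hV, one_mulVec]

theorem card_eigenvalues_lt_add_finrank_le [DecidableEq n] {V : Matrix n n 𝕜}
    (hV : V ∈ unitaryGroup n 𝕜) (μ : n → ℝ) {c : ℝ} (X : Submodule 𝕜 (n → 𝕜))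
    (hX : ∀ x ∈ X, c * RCLike.re (star x ⬝ᵥ x) ≤
      RCLike.re (star x ⬝ᵥ ((V * diagonal (fun i => (μ i : 𝕜)) * Vᴴ) *ᵥ x))) :
    #{i | μ i < c} + finrank 𝕜 X ≤ Fintype.card n := by
  classical
  have hVV : Vᴴ * V = 1 := mem_unitaryGroup_iff'.mp hV
  -- `W` is the span of the eigenvectors `V *ᵥ Pi.single i 1` with `μ i < c`.
  set W := (⨅ i ∈ {i | c ≤ μ i}, LinearMap.ker (LinearMap.proj i : (n → 𝕜) →ₗ[𝕜] 𝕜)).map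
    (UnitaryGroup.toLinearEquiv ⟨V, hV⟩).toLinearMap
  have hW : finrank 𝕜 W = #{i | μ i < c} := by
    rw [LinearEquiv.finrank_map_eq, LinearMap.finrank_iInf_ker_proj, Fintype.card_subtype]
    simp
  have hdisj : Disjoint W X := by
    rw [Submodule.disjoint_def]
    rintro _ ⟨y, hy, rfl⟩ hyX
    change V *ᵥ y ∈ X at hyX
    change V *ᵥ y = 0
    by_contra hne
    have hlow := hX _ hyX
    rw [star_mulVec_dotProduct_mulVec_mulVec, star_mulVec_dotProduct_mulVec_self hVV,
      ← Matrix.mul_assoc, ← Matrix.mul_assoc, hVV, Matrix.one_mul, Matrix.mul_assoc, hVV,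
      Matrix.mul_one, re_star_dotProduct_diagonal_mulVec, re_star_dotProduct_self] at hlow
    have hy0 : y ≠ 0 := by rintro rfl; exact hne (mulVec_zero V)
    have hsupp : ∀ i, c ≤ μ i → y i = 0 := by
      simpa [Submodule.mem_iInf] using hy
    linarith [sum_mul_norm_sq_lt_mul_sum_norm_sq hy0 hsupp]
  calc #{i | μ i < c} + finrank 𝕜 X = finrank 𝕜 W + finrank 𝕜 X := by rw [hW]
    _ ≤ finrank 𝕜 (n → 𝕜) := Submodule.finrank_add_finrank_le_of_disjoint hdisj
    _ = Fintype.card n := finrank_fintype_fun_eq_card 𝕜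

theorem card_lt_eigenvalues_add_finrank_le [DecidableEq n] {V : Matrix n n 𝕜}
    (hV : V ∈ unitaryGroup n 𝕜) (μ : n → ℝ) {c : ℝ} (X : Submodule 𝕜 (n → 𝕜))
    (hX : ∀ x ∈ X, RCLike.re (star x ⬝ᵥ ((V * diagonal (fun i => (μ i : 𝕜)) * Vᴴ) *ᵥ x)) ≤
      c * RCLike.re (star x ⬝ᵥ x)) :
    #{i | c < μ i} + finrank 𝕜 X ≤ Fintype.card n := by
  have hneg : V * diagonal (fun i => (((-μ) i : ℝ) : 𝕜)) * Vᴴ =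
      -(V * diagonal (fun i => (μ i : 𝕜)) * Vᴴ) := by
    simp only [Pi.neg_apply, RCLike.ofReal_neg, ← diagonal_neg, Matrix.mul_neg, Matrix.neg_mul]
  have h := card_eigenvalues_lt_add_finrank_le hV (-μ) (c := -c) X fun x hx => by
    rw [hneg, neg_mulVec, dotProduct_neg, map_neg]
    linarith [hX x hx]
  simpa only [Pi.neg_apply, neg_lt_neg_iff] using h

end

section

variable {𝕜 : Type*} [RCLike 𝕜] {N K : ℕ} {V : Matrix (Fin N) (Fin N) 𝕜} {μ : Fin N → ℝ}
  {U : Matrix (Fin N) (Fin K) 𝕜} {L E : Matrix (Fin N) (Fin N) 𝕜} {ε : ℝ}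

theorem abs_re_star_dotProduct_mulVec_le_of_opNorm_le (hE : opNorm E ≤ ε) (x : Fin N → 𝕜) :
    |RCLike.re (star x ⬝ᵥ (E *ᵥ x))| ≤ ε * RCLike.re (star x ⬝ᵥ x) := by
  set x' : EuclideanSpace 𝕜 (Fin N) := WithLp.toLp 2 x
  have hinner : inner 𝕜 x' (toEuclideanLin E x') = star x ⬝ᵥ (E *ᵥ x) := by
    rw [EuclideanSpace.inner_eq_star_dotProduct, dotProduct_comm]; rfl
  have hnorm : RCLike.re (star x ⬝ᵥ x) = ‖x'‖ ^ 2 := by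
    rw [← inner_self_eq_norm_sq (𝕜 := 𝕜), EuclideanSpace.inner_eq_star_dotProduct,
      dotProduct_comm]
  have hop : ‖toEuclideanLin E x'‖ ≤ opNorm E * ‖x'‖ :=
    (LinearMap.toContinuousLinearMap (toEuclideanLin E)).le_opNorm x'
  rw [← hinner, hnorm]
  calc |RCLike.re (inner 𝕜 x' (toEuclideanLin E x'))|
      ≤ ‖x'‖ * ‖toEuclideanLin E x'‖ := (RCLike.abs_re_le_norm _).trans (norm_inner_le_norm _ _)
    _ ≤ ‖x'‖ * (ε * ‖x'‖) := by gcongr; exact hop.trans (by gcongr)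
    _ = ε * ‖x'‖ ^ 2 := by ring

theorem card_eigenvalues_lt_one_sub_add_le_add_rank (hV : V ∈ unitaryGroup (Fin N) 𝕜)
    (hU : Uᴴ * U = 1) (hE : opNorm E ≤ ε)
    (hsum : V * diagonal (fun i => (μ i : 𝕜)) * Vᴴ = U * Uᴴ + L + E) :
    #{i | μ i < 1 - ε} + K ≤ N + L.rank := by
  have hX : ∀ x ∈ LinearMap.range U.mulVecLin ⊓ LinearMap.ker L.mulVecLin,
      (1 - ε) * RCLike.re (star x ⬝ᵥ x) ≤
        RCLike.re (star x ⬝ᵥ ((V * diagonal (fun i => (μ i : 𝕜)) * Vᴴ) *ᵥ x)) := by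
    rintro x ⟨hxU, hxL⟩
    rw [hsum, add_mulVec, mul_conjTranspose_add_mulVec_eq_self hU hxU hxL,
      dotProduct_add, map_add]
    linarith [(abs_le.mp (abs_re_star_dotProduct_mulVec_le_of_opNorm_le hE x)).1]
  have hcount := card_eigenvalues_lt_add_finrank_le hV μ _ hX
  have hdim := Submodule.finrank_add_finrank_le_finrank_inf_add_finrank
    (LinearMap.range U.mulVecLin) (LinearMap.ker L.mulVecLin)
  have hrangeU := finrank_range_mulVecLin_of_mul_eq_one hU
  have hkerL := rank_add_finrank_ker_mulVecLin L
  simp only [Fintype.card_fin, finrank_fin_fun] at hcount hdim hrangeU hkerL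
  omega

theorem card_lt_eigenvalues_le_add_rank (hV : V ∈ unitaryGroup (Fin N) 𝕜) (hU : Uᴴ * U = 1)
    (hE : opNorm E ≤ ε) (hsum : V * diagonal (fun i => (μ i : 𝕜)) * Vᴴ = U * Uᴴ + L + E) :
    #{i | ε < μ i} ≤ K + L.rank := by
  have hY : ∀ x ∈ LinearMap.ker Uᴴ.mulVecLin ⊓ LinearMap.ker L.mulVecLin,
      RCLike.re (star x ⬝ᵥ ((V * diagonal (fun i => (μ i : 𝕜)) * Vᴴ) *ᵥ x)) ≤
        ε * RCLike.re (star x ⬝ᵥ x) := by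
    rintro x ⟨hxU, hxL⟩
    rw [hsum, add_mulVec, mul_conjTranspose_add_mulVec_eq_zero U hxU hxL, zero_add]
    exact (abs_le.mp (abs_re_star_dotProduct_mulVec_le_of_opNorm_le hE x)).2
  have hcount := card_lt_eigenvalues_add_finrank_le hV μ _ hY
  have hdim := Submodule.finrank_add_finrank_le_finrank_inf_add_finrank
    (LinearMap.ker Uᴴ.mulVecLin) (LinearMap.ker L.mulVecLin)
  have hkerUH := finrank_ker_mulVecLin_add_of_mul_eq_one hU
  have hkerL := rank_add_finrank_ker_mulVecLin L
  simp only [Fintype.card_fin, finrank_fin_fun] at hcount hdim hkerUH hkerL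
  omega

end

end Matrix

theorem stmt0_general {N K : ℕ} (A : Matrix (Fin N) (Fin N) ℂ)
    (μ : Fin N → ℝ)
    (V : Matrix (Fin N) (Fin N) ℂ) (hV : V ∈ Matrix.unitaryGroup (Fin N) ℂ)
    (hdiag : A = V * Matrix.diagonal (fun i => (μ i : ℂ)) * Vᴴ)
    (U : Matrix (Fin N) (Fin K) ℂ) (hU : Uᴴ * U = 1)
    (L E : Matrix (Fin N) (Fin N) ℂ)
    (r : ℕ) (hr : L.rank = r)
    (ε : ℝ) (hEnorm : opNorm E ≤ ε)
    (hsum : A = U * Uᴴ + L + E) :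
    (Finset.univ.filter fun ℓ : Fin N => ε < μ ℓ ∧ μ ℓ < 1 - ε).card ≤ 2 * r := by
  classical
  subst hdiag
  rcases le_or_gt (1 - ε) ε with hε | hε
  · simp only [filter_eq_empty_iff.mpr fun ℓ _ (h : ε < μ ℓ ∧ μ ℓ < 1 - ε) => by
      linarith [h.1, h.2], card_empty, zero_le]
  have hlow := card_eigenvalues_lt_one_sub_add_le_add_rank hV hU hEnorm hsum
  have hhigh := card_lt_eigenvalues_le_add_rank hV hU hEnorm hsum
  have hcount := card_filter_and_add_card (p := fun ℓ => ε < μ ℓ)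
    (q := fun ℓ => μ ℓ < 1 - ε) fun ℓ => (le_or_gt (1 - ε) (μ ℓ)).imp_left hε.trans_le
  rw [Fintype.card_fin] at hcount
  omega

/-- If a Hermitian matrix `A` with eigenvalues `μ 0 ≥ ⋯ ≥ μ (N-1)` can be written as
`A = U Uᴴ + L + E` with `U` having orthonormal columns, `L` Hermitian of rank `r`, and
`E` Hermitian with `‖E‖ ≤ ε`, then at most `2r` eigenvalues lie strictly between
`ε` and `1 - ε`. -/
theorem stmt0 {N K : ℕ} (A : Matrix (Fin N) (Fin N) ℂ) (hA : A.IsHermitian)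
    (μ : Fin N → ℝ) (hmono : Antitone μ)
    (V : Matrix (Fin N) (Fin N) ℂ) (hV : V ∈ Matrix.unitaryGroup (Fin N) ℂ)
    (hdiag : A = V * Matrix.diagonal (fun i => (μ i : ℂ)) * Vᴴ)
    (U : Matrix (Fin N) (Fin K) ℂ) (hU : Uᴴ * U = 1)
    (L E : Matrix (Fin N) (Fin N) ℂ) (hL : L.IsHermitian) (hE : E.IsHermitian)
    (r : ℕ) (hr : L.rank = r)
    (ε : ℝ) (hε : 0 < ε) (hEnorm : opNorm E ≤ ε)
    (hsum : A = U * Uᴴ + L + E) :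
    (Finset.univ.filter fun ℓ : Fin N => ε < μ ℓ ∧ μ ℓ < 1 - ε).card ≤ 2 * r :=
  stmt0_general A μ V hV hdiag U hU L E r hr ε hEnorm hsum
end

section
/- Let A be an N×N symmetric (Hermitian) matrix with eigenvalues 1 ≥ λ⁽⁰⁾ ≥ ⋯ ≥ λ⁽ᴺ⁻¹⁾ ≥ 0 and orthonormal eigenvectors v₀,…,v_{N−1}. Fix ε ∈ (0, 1/2) and let r′ = #{ℓ : ε < λ⁽ℓ⁾ < 1 − ε}. Choose K such that λ⁽ᴷ⁻¹⁾ > ε and λ⁽ᴷ⁾ < 1 − ε, and set V_[K] = [v₀ ⋯ v_{K−1}]. Then there exist N×r′ matrices U₁, U₂ and an N×N matrix E with ‖E‖ ≤ ε such that V_[K] V_[K]* = A + U₁U₂* + E. -/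
open Matrix
open scoped Matrix.Norms.L2Operator

lemma opNorm_eq_norm {m n : ℕ} (M : Matrix (Fin m) (Fin n) ℂ) : opNorm M = ‖M‖ := rfl

lemma norm_diagonal_le' {n : ℕ} (e : Fin n → ℝ) {ε : ℝ} (hε : 0 ≤ ε)
    (h : ∀ i, |e i| ≤ ε) :
    ‖(Matrix.diagonal (fun i => (e i : ℂ)) : Matrix (Fin n) (Fin n) ℂ)‖ ≤ ε := by
  rw [Matrix.l2_opNorm_def]
  apply ContinuousLinearMap.opNorm_le_bound _ hε
  intro x
  simp only [LinearEquiv.trans_apply, LinearMap.coe_toContinuousLinearMap']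
  rw [EuclideanSpace.norm_eq, EuclideanSpace.norm_eq]
  have key : ∀ i, ‖(toEuclideanLin (Matrix.diagonal (fun i => (e i : ℂ))) x) i‖ ^ 2
      ≤ ε ^2 * ‖x i‖ ^ 2 := by
    intro i
    have : (toEuclideanLin (Matrix.diagonal (fun i => (e i : ℂ))) x) i = (e i : ℂ) * x i := by
      rw [toEuclideanLin_apply]
      simp [Matrix.mulVec_diagonal]
    rw [this, norm_mul, mul_pow, Complex.norm_real]
    have : ‖e i‖ ^ 2 ≤ ε ^ 2 := by
      rw [Real.norm_eq_abs]
      exact pow_le_pow_left₀ (abs_nonneg _) (h i) 2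
    nlinarith [norm_nonneg (x i), sq_nonneg (‖x i‖)]
  calc √(∑ i, ‖(toEuclideanLin (Matrix.diagonal (fun i => (e i : ℂ))) x) i‖ ^ 2)
      ≤ √(∑ i, ε ^ 2 * ‖x i‖ ^ 2) := Real.sqrt_le_sqrt (Finset.sum_le_sum fun i _ => key i)
    _ = ε * √(∑ i, ‖x i‖ ^ 2) := by
        rw [← Finset.mul_sum, Real.sqrt_mul (sq_nonneg ε), Real.sqrt_sq hε]

lemma proj_eq {N K : ℕ} (hK : K ≤ N) (V : Matrix (Fin N) (Fin N) ℂ) :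
    V.submatrix id (Fin.castLE hK) * (V.submatrix id (Fin.castLE hK))ᴴ
      = V * Matrix.diagonal (fun i : Fin N => if (i : ℕ) < K then (1:ℂ) else 0) * Vᴴ := by
  ext i j
  conv_lhs => rw [Matrix.mul_apply]
  conv_rhs => rw [Matrix.mul_apply]
  simp only [Matrix.mul_diagonal, Matrix.conjTranspose_apply,
    Matrix.submatrix_apply, id_eq]
  have hterm : ∀ k : Fin N, V i k * (if (k : ℕ) < K then (1:ℂ) else 0) * star (V j k)
      = if (k : ℕ) < K then V i k * star (V j k) else 0 := by
    intro k; split <;> simp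
  rw [Finset.sum_congr rfl fun k _ => hterm k]
  set G : ℕ → ℂ := fun t => if h : t < N then V i ⟨t, h⟩ * star (V j ⟨t, h⟩) else 0 with hG
  have h1 : ∑ k : Fin K, V i (Fin.castLE hK k) * star (V j (Fin.castLE hK k))
      = ∑ t ∈ Finset.range K, G t := by
    rw [← Fin.sum_univ_eq_sum_range]
    refine Finset.sum_congr rfl fun k _ => ?_
    show _ = if h : (k : ℕ) < N then V i ⟨k, h⟩ * star (V j ⟨k, h⟩) else 0
    rw [dif_pos (lt_of_lt_of_le k.isLt hK)]
    rfl
  have h2 : ∑ k : Fin N, (if (k : ℕ) < K then V i k * star (V j k) else 0)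
      = ∑ t ∈ Finset.range N, (if t < K then G t else 0) := by
    rw [← Fin.sum_univ_eq_sum_range]
    refine Finset.sum_congr rfl fun k _ => ?_
    simp [hG, k.isLt]
  rw [h1, h2]
  rw [← Finset.sum_subset (Finset.range_subset_range.mpr hK)
    (fun t _ ht => if_neg (by simpa using ht))]
  exact (Finset.sum_congr rfl fun t ht => (if_pos (Finset.mem_range.mp ht)).symm)

/-- If `A` is Hermitian with eigen-decomposition `A = V diag(μ) Vᴴ`, eigenvalues
`1 ≥ μ 0 ≥ ⋯ ≥ μ (N-1) ≥ 0`, `ε ∈ (0,1/2)`, `r'` is the number of eigenvalues in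
`(ε, 1-ε)`, and `K` satisfies `μ (K-1) > ε` and `μ K < 1 - ε`, then the projector onto
the top `K` eigenvectors satisfies `V_[K] V_[K]ᴴ = A + U₁ U₂ᴴ + E` with `U₁, U₂` of
width `r'` and `‖E‖ ≤ ε`. -/
theorem stmt2 {N K : ℕ} (hK : K ≤ N)
    (A : Matrix (Fin N) (Fin N) ℂ) (hA : A.IsHermitian)
    (μ : Fin N → ℝ) (hmono : Antitone μ) (hμ : ∀ i, 0 ≤ μ i ∧ μ i ≤ 1)
    (V : Matrix (Fin N) (Fin N) ℂ) (hV : V ∈ Matrix.unitaryGroup (Fin N) ℂ)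
    (hdiag : A = V * Matrix.diagonal (fun i => (μ i : ℂ)) * Vᴴ)
    (ε : ℝ) (hε : 0 < ε) (hε2 : ε < 1/2)
    (hK1 : ∀ i : Fin N, (i : ℕ) = K - 1 → 0 < K → ε < μ i)
    (hK2 : ∀ i : Fin N, (i : ℕ) = K → μ i < 1 - ε)
    (r' : ℕ) (hr' : r' = (Finset.univ.filter fun ℓ : Fin N => ε < μ ℓ ∧ μ ℓ < 1 - ε).card) :
    ∃ (U₁ U₂ : Matrix (Fin N) (Fin r') ℂ) (E : Matrix (Fin N) (Fin N) ℂ),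
      opNorm E ≤ ε ∧
      (V.submatrix id (Fin.castLE hK)) * (V.submatrix id (Fin.castLE hK))ᴴ
        = A + U₁ * U₂ᴴ + E := by
  classical
  set S : Finset (Fin N) := Finset.univ.filter (fun ℓ : Fin N => ε < μ ℓ ∧ μ ℓ < 1 - ε) with hS
  -- the enumeration of S
  let g := S.orderIsoOfFin hr'.symm
  let f : Fin r' → Fin N := fun j => (g j : Fin N)
  have hfS : ∀ j, f j ∈ S := fun j => (g j).2
  have hfinj : Function.Injective f := fun a b hab => g.injective (Subtype.ext hab)
  have hfsurj : ∀ i ∈ S, ∃ j, f j = i := fun i hi =>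
    ⟨g.symm ⟨i, hi⟩, by simp [f]⟩
  -- the real functions
  set c : Fin N → ℝ := fun i => (if (i : ℕ) < K then 1 else 0) - μ i with hc
  set msp : Fin N → ℝ := fun i => if i ∈ S then c i else 0 with hm
  set esp : Fin N → ℝ := fun i => if i ∈ S then 0 else c i with he
  -- bound on c off S
  have hcb : ∀ i, i ∉ S → |c i| ≤ ε := by
    intro i hi
    have hiS : ¬(ε < μ i ∧ μ i < 1 - ε) := by
      intro h; exact hi (by simp [hS, h])
    have h0 := (hμ i).1
    have h1 := (hμ i).2
    by_cases hik : (i : ℕ) < K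
    · have hK0 : 0 < K := by omega
      have hKN : K - 1 < N := by omega
      have hgt : ε < μ i := by
        refine lt_of_lt_of_le (hK1 ⟨K - 1, hKN⟩ rfl hK0) (hmono ?_)
        rw [Fin.le_def]; dsimp; omega
      have hge : 1 - ε ≤ μ i := not_lt.mp fun hlt => hiS ⟨hgt, hlt⟩
      rw [hc]; dsimp only; rw [if_pos hik, abs_le]
      constructor <;> linarith
    · have hKN : K < N := lt_of_le_of_lt (not_lt.mp hik) i.isLt
      have hlt : μ i < 1 - ε := by
        refine lt_of_le_of_lt (hmono ?_) (hK2 ⟨K, hKN⟩ rfl)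
        rw [Fin.le_def]; dsimp; omega
      have hle : μ i ≤ ε := not_lt.mp fun h => hiS ⟨h, hlt⟩
      rw [hc]; dsimp only; rw [if_neg hik, abs_le]
      constructor <;> linarith
  have heb : ∀ i, |esp i| ≤ ε := by
    intro i
    rw [he]; dsimp only
    by_cases hiS : i ∈ S
    · rw [if_pos hiS]; simpa using le_of_lt hε
    · rw [if_neg hiS]; exact hcb i hiS
  -- the matrices
  set B : Matrix (Fin N) (Fin r') ℂ :=
    Matrix.of (fun i j => if i = f j then (msp i : ℂ) else 0) with hB
  set C : Matrix (Fin N) (Fin r') ℂ :=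
    Matrix.of (fun i j => if i = f j then (1 : ℂ) else 0) with hCdef
  set E : Matrix (Fin N) (Fin N) ℂ :=
    V * Matrix.diagonal (fun i => (esp i : ℂ)) * Vᴴ with hE
  refine ⟨V * B, V * C, E, ?_, ?_⟩
  · -- norm bound
    rw [opNorm_eq_norm, hE, ← Matrix.star_eq_conjTranspose,
      CStarRing.norm_mul_mem_unitary _ (Unitary.star_mem hV),
      CStarRing.norm_mem_unitary_mul _ hV]
    exact norm_diagonal_le' esp (le_of_lt hε) heb
  · -- the identity
    have hBC : B * Cᴴ = Matrix.diagonal (fun i => (msp i : ℂ)) := by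
      ext i k
      rw [Matrix.mul_apply]
      simp only [hB, hCdef, Matrix.conjTranspose_apply, Matrix.of_apply]
      by_cases hik : i = k
      · subst hik
        by_cases hiS : i ∈ S
        · obtain ⟨j₀, hj₀⟩ := hfsurj i hiS
          rw [Finset.sum_eq_single j₀]
          · rw [Matrix.diagonal_apply_eq]
            simp [hj₀.symm]
          · intro b _ hb
            have : i ≠ f b := fun h => hb (hfinj (hj₀.trans h)).symm
            simp [this]
          · intro h; exact absurd (Finset.mem_univ j₀) h
        · have hm0 : msp i = 0 := if_neg hiS
          rw [Matrix.diagonal_apply_eq]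
          simp [hm0]
      · rw [Matrix.diagonal_apply_ne _ hik]
        apply Finset.sum_eq_zero
        intro j _
        by_cases h1 : i = f j
        · have : k ≠ f j := fun h => hik (h1.trans h.symm)
          simp [this]
        · simp [h1]
    have hU : (V * B) * (V * C)ᴴ = V * Matrix.diagonal (fun i => (msp i : ℂ)) * Vᴴ := by
      rw [Matrix.conjTranspose_mul, ← hBC]
      simp only [Matrix.mul_assoc]
    rw [hU, proj_eq hK V, hdiag, hE]
    have hdsum : Matrix.diagonal (fun i : Fin N => if (i : ℕ) < K then (1:ℂ) else 0)
        = Matrix.diagonal (fun i => (μ i : ℂ)) + Matrix.diagonal (fun i => (msp i : ℂ))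
          + Matrix.diagonal (fun i => (esp i : ℂ)) := by
      rw [Matrix.diagonal_add, Matrix.diagonal_add]
      have hfun : (fun i : Fin N => if (i : ℕ) < K then (1:ℂ) else 0)
          = fun i : Fin N => (μ i : ℂ) + (msp i : ℂ) + (esp i : ℂ) := by
        funext i
        have hreal : (if (i : ℕ) < K then (1:ℝ) else 0) = μ i + msp i + esp i := by
          rw [hm, he]; dsimp only
          by_cases hiS : i ∈ S <;> simp [hiS, hc]
        calc (if (i : ℕ) < K then (1:ℂ) else 0)
            = ((if (i : ℕ) < K then (1:ℝ) else 0 : ℝ) : ℂ) := by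
              split <;> simp
          _ = ((μ i + msp i + esp i : ℝ) : ℂ) := by rw [hreal]
          _ = (μ i : ℂ) + (msp i : ℂ) + (esp i : ℂ) := by push_cast; ring
      rw [hfun]
    rw [hdsum]
    noncomm_ring
end

section
/- Let A be an N×N Hermitian matrix with eigenvalues 1 ≥ λ⁽⁰⁾ ≥ ⋯ ≥ λ⁽ᴺ⁻¹⁾ ≥ 0 and orthonormal eigenvectors v₀,…,v_{N−1}. Fix ε ∈ (0,1/2), let r = #{ℓ : ε < λ⁽ℓ⁾ < 1 − ε}, and choose K with λ⁽ᴷ⁻¹⁾ > ε and λ⁽ᴷ⁾ < 1 − ε. Let A_K† = V_[K] Λ_[K]⁻¹ V_[K]* be the rank-K truncated pseudoinverse. Then there exist N×r matrices U₃, U₄ and an N×N matrix E with ‖E‖ ≤ 3ε such that A_K† = A + U₃U₄* + E. -/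
open Matrix

/-!
In the eigenbasis of `A`, `A_K† - A = V diag(g - μ) Vᴴ`, where `g` is the reciprocal spectrum
truncated to the first `K` indices. The `r` eigenvalues inside `(ε, 1 - ε)` contribute a term of
rank at most `r`, which is `U₃ U₄ᴴ`. Every other eigenvalue either has index `< K` and lies in
`[1 - ε, 1]`, where `0 ≤ 1/μ - μ ≤ 3ε` because `ε < 1/2`, or has index `≥ K` and lies in `[0, ε]`,
where `g = 0`. The remainder is therefore unitarily conjugate to a diagonal matrix with entries of
modulus at most `3ε`.
-/

open scoped Matrix.Norms.L2Operator

namespace Matrix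

variable {m n ι α : Type*} [Fintype n] [Fintype ι] [DecidableEq n] [DecidableEq ι]

theorem submatrix_mul_diagonal_mul_conjTranspose_submatrix [Semiring α] [Star α]
    (V W : Matrix m n α) (e : ι ↪ n) (f : n → α) :
    V.submatrix id e * diagonal (fun k => f (e k)) * (W.submatrix id e)ᴴ
      = V * diagonal ((Set.range e).indicator f) * Wᴴ := by
  refine Matrix.ext fun i j => ?_
  simp only [mul_apply (M := _ * diagonal _), mul_diagonal, conjTranspose_apply, submatrix_apply,
    id_eq]
  calc _ = ∑ l ∈ Finset.univ.map e, V i l * (Set.range e).indicator f l * star (W j l) := by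
        simp [Set.indicator_of_mem]
    _ = _ := Finset.sum_subset (Finset.subset_univ _) fun l _ hl => by
        simp [Set.indicator_of_notMem (show l ∉ Set.range e by simpa using hl)]

theorem exists_mul_diagonal_mul_conjTranspose_eq_add [Ring α] [Star α]
    (V : Matrix m n α) (g μ : n → α) (S : Finset n) :
    ∃ U₃ U₄ : Matrix m (Fin S.card) α, V * diagonal g * Vᴴ
      = V * diagonal μ * Vᴴ + U₃ * U₄ᴴ + V * diagonal ((↑S : Set n)ᶜ.indicator (g - μ)) * Vᴴ := by
  let e : Fin S.card ↪ n := S.equivFin.symm.toEmbedding.trans (Function.Embedding.subtype (· ∈ S))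
  have he : Set.range e = S := by
    ext l
    refine ⟨?_, fun hl => ⟨S.equivFin ⟨l, hl⟩, by simp [e]⟩⟩
    rintro ⟨k, rfl⟩
    simp [e]
  have hsplit : g = μ + (↑S : Set n).indicator (g - μ) + (↑S : Set n)ᶜ.indicator (g - μ) := by
    rw [add_assoc, Set.indicator_self_add_compl, add_sub_cancel]
  refine ⟨V.submatrix id e * diagonal (fun k => (g - μ) (e k)), V.submatrix id e, ?_⟩
  rw [submatrix_mul_diagonal_mul_conjTranspose_submatrix, he, ← Matrix.add_mul, ← Matrix.add_mul,
    ← Matrix.mul_add, ← Matrix.mul_add, diagonal_add, diagonal_add]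
  conv_lhs => rw [hsplit]
  rfl

theorem l2_opNorm_unitary_mul_diagonal_mul_conjTranspose {𝕜 : Type*} [RCLike 𝕜] {V : Matrix n n 𝕜}
    (hV : V ∈ unitaryGroup n 𝕜) (v : n → 𝕜) : ‖V * diagonal v * Vᴴ‖ = ‖v‖ := by
  rw [← l2_opNorm_diagonal v]
  exact (CStarRing.norm_mul_coe_unitary _ ⟨_, Unitary.star_mem hV⟩).trans
    (CStarRing.norm_coe_unitary_mul ⟨V, hV⟩ _)

end Matrix

theorem abs_inv_sub_self_le {x ε : ℝ} (hε : ε ≤ 1 / 2) (hx : 1 - ε ≤ x) (hx1 : x ≤ 1) :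
    |x⁻¹ - x| ≤ 3 * ε := by
  have hx0 : 0 < x := by linarith
  have hinv : x⁻¹ ≤ 1 + 2 * ε := by
    rw [inv_le_iff_one_le_mul₀ hx0]
    nlinarith
  rw [abs_of_nonneg (sub_nonneg.2 (hx1.trans ((one_le_inv₀ hx0).2 hx1)))]
  linarith

theorem norm_indicator_inv_sub_le_of_outside_band {N K : ℕ} (hK : K ≤ N) {μ : Fin N → ℝ}
    (hmono : Antitone μ) (hμ : ∀ i, 0 ≤ μ i ∧ μ i ≤ 1) {ε : ℝ} (hε2 : ε < 1 / 2)
    (hK1 : ∀ i : Fin N, (i : ℕ) = K - 1 → 0 < K → ε < μ i)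
    (hK2 : ∀ i : Fin N, (i : ℕ) = K → μ i < 1 - ε) {l : Fin N}
    (hl : ¬(ε < μ l ∧ μ l < 1 - ε)) :
    ‖(Set.range (Fin.castLE hK)).indicator (fun i => (((μ i)⁻¹ : ℝ) : ℂ)) l - μ l‖ ≤ 3 * ε := by
  rw [Fin.range_castLE]
  by_cases hlK : (l : ℕ) < K
  · have hεl : ε < μ l := (hK1 ⟨K - 1, by omega⟩ rfl (by omega)).trans_le
      (hmono (Fin.le_iff_val_le_val.2 (by simp only; omega)))
    rw [Set.indicator_of_mem (show l ∈ {i : Fin N | (i : ℕ) < K} from hlK), ← Complex.ofReal_sub,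
      Complex.norm_real, Real.norm_eq_abs]
    exact abs_inv_sub_self_le hε2.le (not_lt.1 fun h => hl ⟨hεl, h⟩) (hμ l).2
  · have hl1 : μ l < 1 - ε := (hmono (Fin.le_iff_val_le_val.2 (by simp only; omega))).trans_lt
      (hK2 ⟨K, by omega⟩ rfl)
    have hlε : μ l ≤ ε := not_lt.1 fun h => hl ⟨h, hl1⟩
    rw [Set.indicator_of_notMem (show l ∉ {i : Fin N | (i : ℕ) < K} from hlK), zero_sub, norm_neg,
      Complex.norm_real, Real.norm_of_nonneg (hμ l).1]
    linarith [(hμ l).1]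

theorem stmt3_general {N K : ℕ} (hK : K ≤ N)
    (A : Matrix (Fin N) (Fin N) ℂ)
    (μ : Fin N → ℝ) (hmono : Antitone μ) (hμ : ∀ i, 0 ≤ μ i ∧ μ i ≤ 1)
    (V : Matrix (Fin N) (Fin N) ℂ) (hV : V ∈ Matrix.unitaryGroup (Fin N) ℂ)
    (hdiag : A = V * Matrix.diagonal (fun i => (μ i : ℂ)) * Vᴴ)
    (ε : ℝ) (hε : 0 < ε) (hε2 : ε < 1/2)
    (hK1 : ∀ i : Fin N, (i : ℕ) = K - 1 → 0 < K → ε < μ i)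
    (hK2 : ∀ i : Fin N, (i : ℕ) = K → μ i < 1 - ε)
    (r : ℕ) (hr : r = (Finset.univ.filter fun ℓ : Fin N => ε < μ ℓ ∧ μ ℓ < 1 - ε).card) :
    ∃ (U₃ U₄ : Matrix (Fin N) (Fin r) ℂ) (E : Matrix (Fin N) (Fin N) ℂ),
      opNorm E ≤ 3 * ε ∧
      (V.submatrix id (Fin.castLE hK))
          * Matrix.diagonal (fun k : Fin K => (((μ (Fin.castLE hK k))⁻¹ : ℝ) : ℂ))
          * (V.submatrix id (Fin.castLE hK))ᴴ
        = A + U₃ * U₄ᴴ + E := by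
  subst hr
  set S := Finset.univ.filter fun ℓ : Fin N => ε < μ ℓ ∧ μ ℓ < 1 - ε
  set g : Fin N → ℂ := (Set.range (Fin.castLE hK)).indicator fun i => (((μ i)⁻¹ : ℝ) : ℂ)
  obtain ⟨U₃, U₄, hU⟩ := exists_mul_diagonal_mul_conjTranspose_eq_add V g (fun i => (μ i : ℂ)) S
  refine ⟨U₃, U₄, V * diagonal ((↑S : Set (Fin N))ᶜ.indicator (g - fun i => (μ i : ℂ))) * Vᴴ,
    ?_, ?_⟩
  · change ‖V * diagonal _ * Vᴴ‖ ≤ 3 * ε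
    rw [l2_opNorm_unitary_mul_diagonal_mul_conjTranspose hV]
    refine (pi_norm_le_iff_of_nonneg (by positivity)).2 fun l => ?_
    by_cases hl : l ∈ S
    · rw [Set.indicator_of_notMem (show l ∉ (↑S : Set (Fin N))ᶜ from not_not.2 hl), norm_zero]
      positivity
    · rw [Set.indicator_of_mem (show l ∈ (↑S : Set (Fin N))ᶜ from hl)]
      exact norm_indicator_inv_sub_le_of_outside_band hK hmono hμ hε2 hK1 hK2
        (by simpa [S] using hl)
  · rw [hdiag, ← hU]
    have h := submatrix_mul_diagonal_mul_conjTranspose_submatrix V V (Fin.castLEEmb hK)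
      fun i => (((μ i)⁻¹ : ℝ) : ℂ)
    rwa [Fin.coe_castLEEmb] at h

/-- If `A` is Hermitian with eigen-decomposition `A = V diag(μ) Vᴴ`, eigenvalues in `[0,1]`
in decreasing order, `ε ∈ (0,1/2)`, `r` is the number of eigenvalues in `(ε, 1-ε)`, and
`K` satisfies `μ (K-1) > ε`, `μ K < 1 - ε`, then the rank-K truncated pseudoinverse
`A_K† = V_[K] Λ_[K]⁻¹ V_[K]ᴴ` satisfies `A_K† = A + U₃ U₄ᴴ + E` with `‖E‖ ≤ 3ε`. -/
theorem stmt3 {N K : ℕ} (hK : K ≤ N)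
    (A : Matrix (Fin N) (Fin N) ℂ) (hA : A.IsHermitian)
    (μ : Fin N → ℝ) (hmono : Antitone μ) (hμ : ∀ i, 0 ≤ μ i ∧ μ i ≤ 1)
    (V : Matrix (Fin N) (Fin N) ℂ) (hV : V ∈ Matrix.unitaryGroup (Fin N) ℂ)
    (hdiag : A = V * Matrix.diagonal (fun i => (μ i : ℂ)) * Vᴴ)
    (ε : ℝ) (hε : 0 < ε) (hε2 : ε < 1/2)
    (hK1 : ∀ i : Fin N, (i : ℕ) = K - 1 → 0 < K → ε < μ i)
    (hK2 : ∀ i : Fin N, (i : ℕ) = K → μ i < 1 - ε)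
    (r : ℕ) (hr : r = (Finset.univ.filter fun ℓ : Fin N => ε < μ ℓ ∧ μ ℓ < 1 - ε).card) :
    ∃ (U₃ U₄ : Matrix (Fin N) (Fin r) ℂ) (E : Matrix (Fin N) (Fin N) ℂ),
      opNorm E ≤ 3 * ε ∧
      (V.submatrix id (Fin.castLE hK))
          * Matrix.diagonal (fun k : Fin K => (((μ (Fin.castLE hK k))⁻¹ : ℝ) : ℂ))
          * (V.submatrix id (Fin.castLE hK))ᴴ
        = A + U₃ * U₄ᴴ + E :=
  stmt3_general hK A μ hmono hμ V hV hdiag ε hε hε2 hK1 hK2 r hr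
end

section
/- For all real x with 0 < |x| < 1, 1/sin(πx) − 1/(πx) = (2/π) Σ_{k=1}^∞ (1 − 2^{−(2k−1)}) ζ(2k) x^{2k−1}, and the series converges absolutely. -/
/-!
Expanding each term of the Mittag-Leffler series `π cot (π x) - 1 / x = Σ_{n ≥ 1} 2x / (x² - n²)`
as a geometric series in `x² / n²` and exchanging the (absolutely convergent) double sum gives
`1 / x - π cot (π x) = 2 Σ_{k ≥ 0} ζ(2k + 2) x^(2k + 1)` for `0 < |x| < 1`.
Since `1 / sin θ = cot (θ / 2) - cot θ`, subtracting this expansion at `x / 2` from the one at `x`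
produces the factor `1 - 2^-(2k + 1)`.
-/

/-- The Riemann zeta function at a natural number argument `s`:
`ζ(s) = Σ_{n ≥ 1} n^{-s}`. -/
noncomputable def zetaNat (s : ℕ) : ℝ := ∑' n : ℕ+, ((n : ℝ) ^ s)⁻¹

open Real

lemma hasSum_zetaNat {s : ℕ} (hs : 2 ≤ s) :
    HasSum (fun n : ℕ => (((n : ℝ) + 1) ^ s)⁻¹) (zetaNat s) := by
  have h : Summable (fun n : ℕ => (((n : ℝ) + 1) ^ s)⁻¹) := by
    have := (summable_nat_add_iff 1).mpr ((summable_nat_pow_inv (p := s)).mpr (by omega))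
    simpa using this
  convert h.hasSum using 1
  rw [zetaNat, ← Equiv.pnatEquivNat.symm.tsum_eq]
  simp [Equiv.pnatEquivNat, Nat.succPNat]

lemma zetaNat_nonneg (s : ℕ) : 0 ≤ zetaNat s :=
  tsum_nonneg fun _ => by positivity

lemma hasSum_odd_pow_div_pow {x a : ℝ} (hxa : x ^ 2 < a ^ 2) :
    HasSum (fun k : ℕ => x ^ (2 * k + 1) / a ^ (2 * k + 2)) (x / (a ^ 2 - x ^ 2)) := by
  have ha : a ^ 2 ≠ 0 := by nlinarith
  have hr : |x ^ 2 / a ^ 2| < 1 := by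
    rw [abs_of_nonneg (by positivity), div_lt_one (by positivity)]; exact hxa
  have hsum : x / (a ^ 2 - x ^ 2) = x / a ^ 2 * (1 - x ^ 2 / a ^ 2)⁻¹ := by
    have : a ≠ 0 := by rintro rfl; simp at ha
    rw [one_sub_div ha]
    field_simp
  rw [hsum]
  refine ((hasSum_geometric_of_abs_lt_one hr).mul_left (x / a ^ 2)).congr_fun fun k => ?_
  rw [div_pow, ← pow_mul, ← pow_mul]
  field_simp
  ring

lemma summable_odd_pow_div_succ_pow {x : ℝ} (hx : |x| < 1) :
    Summable (fun p : ℕ × ℕ => x ^ (2 * p.2 + 1) / ((p.1 : ℝ) + 1) ^ (2 * p.2 + 2)) := by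
  have hn := (hasSum_zetaNat le_rfl).summable
  have hk : Summable (fun k : ℕ => |x| ^ (2 * k + 1)) := by
    simpa [pow_succ, pow_mul] using
      (summable_geometric_of_lt_one (sq_nonneg |x|) (by nlinarith [abs_nonneg x])).mul_right |x|
  refine .of_norm_bounded (hn.mul_of_nonneg hk (fun _ => by positivity) fun _ => by positivity)
    fun ⟨n, k⟩ => ?_
  dsimp only
  rw [norm_div, norm_pow, norm_pow, Real.norm_eq_abs, Real.norm_eq_abs,
    abs_of_pos (by positivity : (0 : ℝ) < n + 1), div_eq_inv_mul]
  gcongr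
  · simp
  · omega

lemma hasSum_zetaNat_mul_odd_pow {x : ℝ} (hx : |x| < 1) :
    HasSum (fun k : ℕ => zetaNat (2 * k + 2) * x ^ (2 * k + 1))
      (∑' n : ℕ, x / (((n : ℝ) + 1) ^ 2 - x ^ 2)) := by
  have hF := (summable_odd_pow_div_succ_pow hx).hasSum
  have hrows : ∀ n : ℕ, HasSum (fun k : ℕ => x ^ (2 * k + 1) / ((n : ℝ) + 1) ^ (2 * k + 2))
      (x / (((n : ℝ) + 1) ^ 2 - x ^ 2)) := fun n => by
    refine hasSum_odd_pow_div_pow ?_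
    have : (1 : ℝ) ≤ (n : ℝ) + 1 := by simp
    nlinarith [sq_abs x, abs_nonneg x]
  have hcols : ∀ k : ℕ, HasSum (fun n : ℕ => x ^ (2 * k + 1) / ((n : ℝ) + 1) ^ (2 * k + 2))
      (zetaNat (2 * k + 2) * x ^ (2 * k + 1)) := fun k => by
    simpa [div_eq_mul_inv, mul_comm] using (hasSum_zetaNat (by omega)).mul_left (x ^ (2 * k + 1))
  rw [(hF.prod_fiberwise hrows).tsum_eq]
  exact ((Equiv.prodComm ℕ ℕ).hasSum_iff.mpr hF).prod_fiberwise hcols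

namespace Real

theorem cot_series_rep' {x : ℝ} (hx : ∀ n : ℤ, x ≠ n) :
    π * cot (π * x) - 1 / x = ∑' n : ℕ, (1 / (x - (n + 1)) + 1 / (x + (n + 1))) := by
  have hxC : (x : ℂ) ∈ Complex.integerComplement := by
    rintro ⟨n, hn⟩
    exact hx n (by exact_mod_cast hn.symm)
  exact_mod_cast _root_.cot_series_rep' hxC

-- Where `sin (θ / 2)` or `cos (θ / 2)` vanishes, all three terms are `0` by the convention `a / 0 = 0`.
theorem cot_half_sub_cot (θ : ℝ) : cot (θ / 2) - cot θ = 1 / sin θ := by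
  obtain ⟨t, rfl⟩ : ∃ t, θ = 2 * t := ⟨θ / 2, by ring⟩
  rw [mul_div_cancel_left₀ _ two_ne_zero, cot_eq_cos_div_sin, cot_eq_cos_div_sin, sin_two_mul,
    cos_two_mul']
  rcases eq_or_ne (sin t) 0 with hs | hs
  · simp [hs]
  rcases eq_or_ne (cos t) 0 with hc | hc
  · simp [hc]
  field_simp
  linear_combination sin_sq_add_cos_sq t

end Real

theorem hasSum_two_mul_zetaNat_mul_odd_pow {x : ℝ} (hx0 : x ≠ 0) (hx1 : |x| < 1) :
    HasSum (fun k : ℕ => 2 * zetaNat (2 * k + 2) * x ^ (2 * k + 1)) (1 / x - π * cot (π * x)) := by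
  have hx : ∀ n : ℤ, x ≠ n := by
    rintro n rfl
    exact hx0 (by exact_mod_cast Int.abs_lt_one_iff.mp (by exact_mod_cast hx1))
  have hterm : ∀ n : ℕ, 1 / (x - (n + 1)) + 1 / (x + (n + 1))
      = -2 * (x / (((n : ℝ) + 1) ^ 2 - x ^ 2)) := fun n => by
    have h1 : x - (n + 1) ≠ 0 := by linarith [le_abs_self x, n.cast_nonneg (α := ℝ)]
    have h2 : x + (n + 1) ≠ 0 := by linarith [neg_abs_le x, n.cast_nonneg (α := ℝ)]
    have h3 : ((n : ℝ) + 1) ^ 2 - x ^ 2 = -((x - (n + 1)) * (x + (n + 1))) := by ring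
    rw [h3]
    field_simp
    ring
  have hcot : 1 / x - π * cot (π * x) = 2 * ∑' n : ℕ, x / (((n : ℝ) + 1) ^ 2 - x ^ 2) := by
    rw [← neg_sub, Real.cot_series_rep' hx, tsum_congr hterm, tsum_mul_left]
    ring
  rw [hcot]
  simpa only [mul_assoc] using (hasSum_zetaNat_mul_odd_pow hx1).mul_left 2

theorem hasSum_inv_sin_sub_inv {x : ℝ} (hx0 : x ≠ 0) (hx1 : |x| < 1) :
    HasSum (fun k : ℕ =>
      (2 / π) * (1 - ((2 : ℝ) ^ (2 * k + 1))⁻¹) * zetaNat (2 * k + 2) * x ^ (2 * k + 1))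
      (1 / sin (π * x) - 1 / (π * x)) := by
  have h := ((hasSum_two_mul_zetaNat_mul_odd_pow hx0 hx1).sub
    (hasSum_two_mul_zetaNat_mul_odd_pow (x := x / 2) (by positivity)
      (by rw [abs_div, abs_two]; linarith [abs_nonneg x]))).div_const π
  have hval : 1 / sin (π * x) - 1 / (π * x)
      = (1 / x - π * cot (π * x) - (1 / (x / 2) - π * cot (π * (x / 2)))) / π := by
    rw [← Real.cot_half_sub_cot, mul_div_assoc]
    field_simp
    ring
  rw [hval]
  refine h.congr_fun fun k => ?_
  rw [div_pow]
  field_simp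

/-- For `0 < |x| < 1`,
`1/sin(πx) - 1/(πx) = (2/π) Σ_{k=1}^∞ (1 - 2^{-(2k-1)}) ζ(2k) x^{2k-1}`,
the series converging absolutely.  (The sum is reindexed by `k ↦ k + 1`.) -/
theorem stmt9 (x : ℝ) (hx0 : x ≠ 0) (hx1 : |x| < 1) :
    Summable (fun k : ℕ =>
      |(2 / Real.pi) * (1 - ((2 : ℝ) ^ (2 * k + 1))⁻¹) * zetaNat (2 * k + 2) * x ^ (2 * k + 1)|) ∧
    HasSum (fun k : ℕ =>
      (2 / Real.pi) * (1 - ((2 : ℝ) ^ (2 * k + 1))⁻¹) * zetaNat (2 * k + 2) * x ^ (2 * k + 1))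
      (1 / Real.sin (Real.pi * x) - 1 / (Real.pi * x)) := by
  refine ⟨?_, hasSum_inv_sin_sub_inv hx0 hx1⟩
  -- the coefficients are nonnegative, so the series of absolute values is the series at `|x|`
  refine (hasSum_inv_sin_sub_inv (abs_ne_zero.mpr hx0) (by rwa [abs_abs])).summable.congr
    fun k => ?_
  have hc : 0 ≤ 1 - ((2 : ℝ) ^ (2 * k + 1))⁻¹ :=
    sub_nonneg.mpr (inv_le_one_of_one_le₀ (one_le_pow₀ one_le_two))
  rw [abs_mul, abs_mul, abs_mul, abs_pow, abs_of_nonneg hc, abs_of_nonneg (zetaNat_nonneg _),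
    abs_of_pos (by positivity : 0 < 2 / π)]
end

section
/- Let A be the N×N diagonal matrix with A[n,n] = n + 1/2 for n = 0,…,N−1 and let b ∈ ℝ^N be the all-ones vector. Then the Hilbert matrix H, defined by H[m,n] = 1/(m+n+1) for m,n ∈ {0,…,N−1}, is the unique solution X of the Lyapunov equation AX + XA* = bb*, and H is positive definite. -/
/-!
For diagonal `A = diag(a)` the Lyapunov equation decouples entrywise into
`(a m + a n) X m n = b m * b n`; with `a n = n + 1/2` and `b = 1` this forces `X m n = 1/(m+n+1)`.
The Hilbert matrix is the Gram matrix of the monomials `1, t, …, t^(N-1)` in `L²(0,1)`, so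
`xᵀ H x = ∫₀¹ p(t)² dt` for the polynomial `p` with coefficient vector `x`; this is positive
when `x ≠ 0`, since a nonzero polynomial vanishes at only finitely many points of `[0,1]`.
-/

open Matrix Polynomial

section Lyapunov

variable {ι : Type*} [Fintype ι] [DecidableEq ι]

theorem diagonal_mul_add_mul_diagonal_transpose_apply {R : Type*} [CommSemiring R] (d : ι → R)
    (X : Matrix ι ι R) (m n : ι) :
    (diagonal d * X + X * (diagonal d)ᵀ) m n = (d m + d n) * X m n := by
  rw [diagonal_transpose, Matrix.add_apply, diagonal_mul, mul_diagonal, add_mul, mul_comm (X m n)]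

theorem diagonal_mul_add_mul_diagonal_transpose_eq_iff {K : Type*} [Field K] (d : ι → K)
    (hd : ∀ m n, d m + d n ≠ 0) (C X : Matrix ι ι K) :
    diagonal d * X + X * (diagonal d)ᵀ = C ↔ X = of fun m n => C m n / (d m + d n) := by
  simp only [← Matrix.ext_iff, diagonal_mul_add_mul_diagonal_transpose_apply, of_apply,
    eq_div_iff (hd _ _), mul_comm (d _ + d _)]

end Lyapunov

theorem intervalIntegral_eval_sq_pos {p : ℝ[X]} (hp : p ≠ 0) {a b : ℝ} (hab : a < b) :
    0 < ∫ t in a..b, p.eval t ^ 2 := by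
  obtain ⟨c, hc, hroot⟩ := (Set.Icc_infinite hab).exists_notMem_finset p.roots.toFinset
  refine intervalIntegral.integral_pos hab (by fun_prop) (fun _ _ => sq_nonneg _)
    ⟨c, hc, pow_two_pos_of_ne_zero ?_⟩
  simpa [hp] using hroot

theorem dotProduct_mulVec_gram_intervalIntegral {ι : Type*} [Fintype ι] {f : ι → ℝ → ℝ}
    (hf : ∀ i, Continuous (f i)) (a b : ℝ) (x : ι → ℝ) :
    x ⬝ᵥ (of fun m n => ∫ t in a..b, f m t * f n t) *ᵥ x
      = ∫ t in a..b, (∑ i, x i * f i t) ^ 2 := by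
  have hcont (i j : ι) : Continuous fun t => x i * f i t * (x j * f j t) :=
    (continuous_const.mul (hf i)).mul (continuous_const.mul (hf j))
  calc x ⬝ᵥ (of fun m n => ∫ t in a..b, f m t * f n t) *ᵥ x
      = ∑ i, ∑ j, ∫ t in a..b, x i * f i t * (x j * f j t) := by
        simp only [dotProduct, mulVec, of_apply, Finset.mul_sum,
          ← intervalIntegral.integral_const_mul, ← intervalIntegral.integral_mul_const]
        congr! 3 with i _ j _
        ext t
        ring
    _ = ∫ t in a..b, ∑ i, ∑ j, x i * f i t * (x j * f j t) := by
        rw [intervalIntegral.integral_finsetSum fun i _ => ?_]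
        · simp only [intervalIntegral.integral_finsetSum fun j _ =>
            (hcont _ j).intervalIntegrable a b]
        · exact (continuous_finsetSum _ fun j _ => hcont i j).intervalIntegrable a b
    _ = ∫ t in a..b, (∑ i, x i * f i t) ^ 2 := by
        simp only [sq, Finset.sum_mul_sum]

noncomputable def hilbertMatrix (N : ℕ) : Matrix (Fin N) (Fin N) ℝ :=
  of fun m n => 1 / ((m : ℝ) + (n : ℝ) + 1)

theorem hilbertMatrix_eq_gram (N : ℕ) :
    hilbertMatrix N = of fun m n : Fin N => ∫ t in (0 : ℝ)..1, t ^ (m : ℕ) * t ^ (n : ℕ) := by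
  ext m n
  simp [hilbertMatrix, ← pow_add, integral_pow]

theorem hilbertMatrix_isHermitian (N : ℕ) : (hilbertMatrix N).IsHermitian := by
  ext m n
  simp [hilbertMatrix, add_comm]

theorem Polynomial.eval_ofFn {R : Type*} [CommSemiring R] [DecidableEq R] (N : ℕ)
    (x : Fin N → R) (t : R) : (ofFn N x).eval t = ∑ i, x i * t ^ (i : ℕ) := by
  simp [ofFn_eq_sum_monomial, eval_finsetSum]

theorem hilbertMatrix_posDef (N : ℕ) : (hilbertMatrix N).PosDef := by
  refine .of_dotProduct_mulVec_pos (hilbertMatrix_isHermitian N) fun x hx => ?_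
  have hp : ofFn N x ≠ 0 := (map_ne_zero_iff _ (injective_ofFn N)).2 hx
  rw [star_trivial, hilbertMatrix_eq_gram,
    dotProduct_mulVec_gram_intervalIntegral (fun i => continuous_pow _)]
  simpa only [eval_ofFn] using intervalIntegral_eval_sq_pos hp zero_lt_one

/-- With `A = diag(n + 1/2)` and `b` the all-ones vector, the Hilbert matrix
`H[m,n] = 1/(m+n+1)` is the unique solution of the Lyapunov equation
`A X + X Aᵀ = b bᵀ`, and `H` is positive definite. -/
theorem stmt17 {N : ℕ} (A H : Matrix (Fin N) (Fin N) ℝ)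
    (hA : A = Matrix.diagonal fun n : Fin N => (n : ℝ) + 1 / 2)
    (hH : H = Matrix.of fun m n : Fin N => 1 / ((m : ℝ) + (n : ℝ) + 1)) :
    A * H + H * Aᵀ = Matrix.vecMulVec (fun _ => 1) (fun _ => 1) ∧
    (∀ X : Matrix (Fin N) (Fin N) ℝ,
      A * X + X * Aᵀ = Matrix.vecMulVec (fun _ => 1) (fun _ => 1) → X = H) ∧
    H.PosDef := by
  have hsolve (X : Matrix (Fin N) (Fin N) ℝ) :
      A * X + X * Aᵀ = vecMulVec (fun _ => 1) (fun _ => 1) ↔ X = H := by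
    rw [hA, diagonal_mul_add_mul_diagonal_transpose_eq_iff _ fun m n => by positivity, hH]
    congr! 1
    ext m n
    simp only [of_apply, vecMulVec_apply]
    ring
  exact ⟨(hsolve H).2 rfl, fun X => (hsolve X).1, hH ▸ hilbertMatrix_posDef N⟩
end

section
/- The N×N Hilbert matrix H with entries H[m,n] = 1/(m+n+1), m,n ∈ {0,…,N−1}, satisfies ‖H‖ ≤ π in operator norm. -/
/-! Schur test with the weights `(n + 1/2)^(-1/2)`: as the Hilbert matrix is symmetric with
positive entries, it suffices that `∑ₙ (m + n + 1)⁻¹ (n + 1/2)^(-1/2) ≤ π (m + 1/2)^(-1/2)`.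
With `a = m + 1/2` the summand is `f (n + 1/2)` for the convex function `f x = ((a + x) √x)⁻¹`,
so by the midpoint inequality it is at most `∫ₙⁿ⁺¹ f`, and `∫₀^∞ f = π / √a` since
`(2 / √a) arctan (√x / √a)` is a primitive of `f`. -/

open Matrix

open Real Set

theorem ConvexOn.two_mul_mul_le_sub_of_hasDerivAt {f G : ℝ → ℝ} {c h : ℝ} (hh : 0 ≤ h)
    (hf : ConvexOn ℝ (Ioo (c - h) (c + h)) f) (hG : ContinuousOn G (Icc (c - h) (c + h)))
    (hG' : ∀ x ∈ Ioo (c - h) (c + h), HasDerivAt G (f x) x) :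
    2 * h * f c ≤ G (c + h) - G (c - h) := by
  have hmono : MonotoneOn (fun t ↦ G (c + t) - G (c - t) - 2 * t * f c) (Icc 0 h) := by
    refine monotoneOn_of_hasDerivWithinAt_nonneg (f' := fun t ↦ f (c + t) + f (c - t) - 2 * f c)
      (convex_Icc 0 h) ?_ (fun t ht ↦ ?_) (fun t ht ↦ ?_)
    · refine .sub (.sub (hG.comp (by fun_prop) ?_) (hG.comp (by fun_prop) ?_)) (by fun_prop) <;>
        intro t ⟨ht₀, hth⟩ <;> constructor <;> linarith
    all_goals
      rw [interior_Icc] at ht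
      have hplus : c + t ∈ Ioo (c - h) (c + h) := ⟨by linarith [ht.1], by linarith [ht.2]⟩
      have hminus : c - t ∈ Ioo (c - h) (c + h) := ⟨by linarith [ht.2], by linarith [ht.1]⟩
    · have := (((hG' _ hplus).comp_const_add c t).sub ((hG' _ hminus).comp_const_sub c t)).sub
        (((hasDerivAt_id t).const_mul 2).mul_const (f c))
      exact (this.congr_deriv (by ring)).hasDerivWithinAt
    · have := hf.2 hplus hminus (by norm_num : (0 : ℝ) ≤ 1 / 2) (by norm_num : (0 : ℝ) ≤ 1 / 2)
        (by norm_num)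
      simp only [smul_eq_mul] at this
      rw [show 1 / 2 * (c + t) + 1 / 2 * (c - t) = c by ring] at this
      linarith
  simpa using hmono ⟨le_rfl, hh⟩ ⟨hh, le_rfl⟩ hh

noncomputable def hilbertIntegrand (a x : ℝ) : ℝ := ((a + x) * √x)⁻¹

noncomputable def hilbertPrimitive (a x : ℝ) : ℝ := 2 / √a * arctan (√x / √a)

lemma hasDerivAt_hilbertPrimitive {a x : ℝ} (ha : 0 < a) (hx : 0 < x) :
    HasDerivAt (hilbertPrimitive a) (hilbertIntegrand a x) x := by
  have hsa : 0 < √a := sqrt_pos.2 ha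
  have hsx : 0 < √x := sqrt_pos.2 hx
  have := (((hasDerivAt_sqrt hx.ne').div_const √a).arctan).const_mul (2 / √a)
  refine this.congr_deriv ?_
  rw [hilbertIntegrand, show a + x = √a ^ 2 + √x ^ 2 by rw [sq_sqrt ha.le, sq_sqrt hx.le]]
  field_simp

lemma continuous_hilbertPrimitive (a : ℝ) : Continuous (hilbertPrimitive a) := by
  unfold hilbertPrimitive
  fun_prop

lemma hilbertPrimitive_le_pi_div_sqrt (a x : ℝ) : hilbertPrimitive a x ≤ π / √a :=
  calc hilbertPrimitive a x ≤ 2 / √a * (π / 2) :=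
        mul_le_mul_of_nonneg_left (arctan_lt_pi_div_two _).le (by positivity)
    _ = π / √a := by ring

lemma convexOn_inv_sqrt : ConvexOn ℝ (Ioi 0) fun x : ℝ ↦ (√x)⁻¹ := by
  have hsqrt : sqrt '' Ioi 0 = Ioi 0 := by
    ext y
    refine ⟨?_, fun hy ↦ ⟨y ^ 2, mem_Ioi.2 (pow_pos hy 2), sqrt_sq hy.out.le⟩⟩
    rintro ⟨x, hx, rfl⟩
    exact sqrt_pos.2 hx
  refine ConvexOn.comp_concaveOn (g := fun y : ℝ ↦ y⁻¹) ?_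
    (strictConcaveOn_sqrt.concaveOn.subset Ioi_subset_Ici_self (convex_Ioi 0)) ?_ <;>
    rw [hsqrt]
  · simpa using convexOn_zpow (𝕜 := ℝ) (-1)
  · exact fun x hx y _ hxy ↦ inv_anti₀ hx hxy

lemma convexOn_hilbertIntegrand {a : ℝ} (ha : 0 ≤ a) :
    ConvexOn ℝ (Ioi 0) (hilbertIntegrand a) := by
  have hshift : ConvexOn ℝ (Ioi 0) fun x : ℝ ↦ (a + x)⁻¹ := by
    have := ((convexOn_zpow (𝕜 := ℝ) (-1)).translate_right a).subset (fun x hx ↦ ?_) (convex_Ioi 0)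
    · simpa [Function.comp_def] using this
    · simp only [mem_preimage, mem_Ioi] at hx ⊢
      linarith
  have hanti₁ : AntitoneOn (fun x : ℝ ↦ (a + x)⁻¹) (Ioi 0) := fun x hx y _ hxy ↦
    inv_anti₀ (add_pos_of_nonneg_of_pos ha hx) (by linarith)
  have hanti₂ : AntitoneOn (fun x : ℝ ↦ (√x)⁻¹) (Ioi 0) := fun x hx y _ hxy ↦
    inv_anti₀ (sqrt_pos.2 hx) (sqrt_le_sqrt hxy)
  refine (hshift.mul convexOn_inv_sqrt (fun x hx ↦ ?_) (fun x _ ↦ ?_)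
    (hanti₁.monovaryOn hanti₂)).congr fun x _ ↦ by simp [hilbertIntegrand, mul_comm]
  · have : 0 < x := hx
    positivity
  · positivity

lemma hilbertIntegrand_le_sub {a : ℝ} (ha : 0 < a) (n : ℕ) :
    hilbertIntegrand a (n + 1 / 2) ≤ hilbertPrimitive a (n + 1) - hilbertPrimitive a n := by
  have hn : (0 : ℝ) ≤ n := n.cast_nonneg
  have hpos : Ioo ((n + 1 / 2 : ℝ) - 1 / 2) (n + 1 / 2 + 1 / 2) ⊆ Ioi 0 := fun x hx ↦
    mem_Ioi.2 (by linarith [hx.1])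
  have key := ((convexOn_hilbertIntegrand ha.le).subset hpos (convex_Ioo _ _))
    |>.two_mul_mul_le_sub_of_hasDerivAt (by norm_num : (0 : ℝ) ≤ 1 / 2)
    (continuous_hilbertPrimitive a).continuousOn
    (fun x hx ↦ hasDerivAt_hilbertPrimitive ha (hpos hx))
  rw [show (n : ℝ) + 1 / 2 + 1 / 2 = n + 1 by ring, add_sub_cancel_right] at key
  linarith

lemma sum_hilbertIntegrand_le {a : ℝ} (ha : 0 < a) (N : ℕ) :
    ∑ n ∈ Finset.range N, hilbertIntegrand a (n + 1 / 2) ≤ π / √a :=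
  calc ∑ n ∈ Finset.range N, hilbertIntegrand a (n + 1 / 2)
      ≤ ∑ n ∈ Finset.range N, (hilbertPrimitive a (n + 1) - hilbertPrimitive a n) :=
        Finset.sum_le_sum fun n _ ↦ hilbertIntegrand_le_sub ha n
    _ = hilbertPrimitive a N := by
        simpa [hilbertPrimitive] using Finset.sum_range_sub (fun n : ℕ ↦ hilbertPrimitive a n) N
    _ ≤ π / √a := hilbertPrimitive_le_pi_div_sqrt a N

lemma sum_hilbert_mul_inv_sqrt_le (m N : ℕ) :
    ∑ n ∈ Finset.range N, 1 / ((m : ℝ) + n + 1) * (√(n + 1 / 2))⁻¹ ≤ π * (√(m + 1 / 2))⁻¹ := by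
  have hm : (0 : ℝ) < m + 1 / 2 := by positivity
  convert sum_hilbertIntegrand_le hm N using 1
  · refine Finset.sum_congr rfl fun n _ ↦ ?_
    rw [hilbertIntegrand, mul_inv, one_div]
    ring_nf
  · exact (div_eq_mul_inv _ _).symm

namespace Matrix

variable {m n : Type*} [Fintype m] [Fintype n]

theorem sum_sq_mulVec_le_of_schur (A : Matrix m n ℝ) {p : m → ℝ} {q : n → ℝ} {C : ℝ}
    (hA : ∀ i j, 0 ≤ A i j) (hq : ∀ j, 0 < q j) (hC : 0 ≤ C)
    (hrow : ∀ i, ∑ j, A i j * q j ≤ C * p i) (hcol : ∀ j, ∑ i, A i j * p i ≤ C * q j)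
    (x : n → ℝ) : ∑ i, (A *ᵥ x) i ^ 2 ≤ C ^ 2 * ∑ j, x j ^ 2 := by
  have hweight : ∀ i j, 0 ≤ A i j * (x j ^ 2 / q j) := fun i j ↦
    mul_nonneg (hA i j) (div_nonneg (sq_nonneg _) (hq j).le)
  -- Cauchy–Schwarz, splitting `(A i j * x j) ^ 2 = (A i j * q j) * (A i j * (x j ^ 2 / q j))`
  have hCS : ∀ i, (A *ᵥ x) i ^ 2 ≤ C * p i * ∑ j, A i j * (x j ^ 2 / q j) := fun i ↦
    calc (A *ᵥ x) i ^ 2 ≤ (∑ j, A i j * q j) * ∑ j, A i j * (x j ^ 2 / q j) :=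
          Finset.sum_sq_le_sum_mul_sum_of_sq_le_mul _
            (fun j _ ↦ mul_nonneg (hA i j) (hq j).le) (fun j _ ↦ hweight i j)
            (fun j _ ↦ le_of_eq (by field_simp [(hq j).ne']))
      _ ≤ C * p i * ∑ j, A i j * (x j ^ 2 / q j) :=
          mul_le_mul_of_nonneg_right (hrow i) (Finset.sum_nonneg fun j _ ↦ hweight i j)
  calc ∑ i, (A *ᵥ x) i ^ 2 ≤ ∑ i, C * p i * ∑ j, A i j * (x j ^ 2 / q j) :=
        Finset.sum_le_sum fun i _ ↦ hCS i
    _ = ∑ j, C * (x j ^ 2 / q j) * ∑ i, A i j * p i := by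
        simp_rw [Finset.mul_sum]
        rw [Finset.sum_comm]
        exact Finset.sum_congr rfl fun j _ ↦ Finset.sum_congr rfl fun i _ ↦ by ring
    _ ≤ ∑ j, C * (x j ^ 2 / q j) * (C * q j) :=
        Finset.sum_le_sum fun j _ ↦ mul_le_mul_of_nonneg_left (hcol j)
          (mul_nonneg hC (div_nonneg (sq_nonneg _) (hq j).le))
    _ = C ^ 2 * ∑ j, x j ^ 2 := by
        rw [Finset.mul_sum]
        exact Finset.sum_congr rfl fun j _ ↦ by field_simp [(hq j).ne']

theorem norm_toEuclideanLin_le_of_schur [DecidableEq n] (A : Matrix m n ℝ) {p : m → ℝ}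
    {q : n → ℝ} {C : ℝ} (hA : ∀ i j, 0 ≤ A i j) (hq : ∀ j, 0 < q j) (hC : 0 ≤ C)
    (hrow : ∀ i, ∑ j, A i j * q j ≤ C * p i) (hcol : ∀ j, ∑ i, A i j * p i ≤ C * q j) :
    ‖(toEuclideanLin A).toContinuousLinearMap‖ ≤ C := by
  refine ContinuousLinearMap.opNorm_le_bound _ hC fun x ↦ ?_
  rw [LinearMap.coe_toContinuousLinearMap', EuclideanSpace.norm_eq, EuclideanSpace.norm_eq,
    ← sqrt_sq hC, ← sqrt_mul (sq_nonneg C)]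
  refine sqrt_le_sqrt ?_
  simpa [Real.norm_eq_abs, sq_abs] using sum_sq_mulVec_le_of_schur A hA hq hC hrow hcol x

end Matrix

/-- The `N × N` Hilbert matrix `H[m,n] = 1/(m+n+1)` has operator norm at most `π`. -/
theorem stmt18 {N : ℕ} (H : Matrix (Fin N) (Fin N) ℝ)
    (hH : H = Matrix.of fun m n : Fin N => 1 / ((m : ℝ) + (n : ℝ) + 1)) :
    opNorm H ≤ Real.pi := by
  subst hH
  have hrow : ∀ m : Fin N, ∑ n : Fin N, 1 / ((m : ℝ) + n + 1) * (√(n + 1 / 2))⁻¹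
      ≤ π * (√(m + 1 / 2))⁻¹ := fun m ↦
    (Fin.sum_univ_eq_sum_range (fun n : ℕ ↦ 1 / ((m : ℝ) + n + 1) * (√(n + 1 / 2))⁻¹) N).trans_le
      (sum_hilbert_mul_inv_sqrt_le m N)
  refine norm_toEuclideanLin_le_of_schur _ (fun m n ↦ by rw [of_apply]; positivity)
    (fun n ↦ by positivity) pi_nonneg hrow fun n ↦ ?_
  simpa only [of_apply, add_comm (_ : ℝ) (n : ℝ)] using hrow n
end

section
/- Let A be an N×N Hermitian positive definite matrix, B an N×M matrix, X the solution of AX + XA* = BB*, and let p₁,…,p_r be positive reals. Define Z₁ = √(2p₁)(A+p₁I)⁻¹B and Z_k = √(p_k/p_{k−1})(I − (p_k+p_{k−1})(A+p_kI)⁻¹)Z_{k−1} for k = 2,…,r, and Z = [Z₁ ⋯ Z_r]. Then X − ZZ* = φ(A) X φ(A)*, where φ(x) = Π_{j=1}^{r}(x−p_j)/(x+p_j). Consequently ‖X − ZZ*‖ ≤ ‖X‖ · max_{x ∈ [λ_min(A), λ_max(A)]} |φ(x)|². -/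
open Matrix
open scoped ComplexOrder

/-- The CF-ADI iterates: `adiZ A B p k` is the `(k+1)`-st block `Z_{k+1}` (0-indexed):
`Z₁ = √(2p₁)(A+p₁I)⁻¹B`, and
`Z_{k+1} = √(p_{k+1}/p_k)(I - (p_{k+1}+p_k)(A+p_{k+1}I)⁻¹)Z_k`. -/
noncomputable def adiZ {N M : ℕ} (A : Matrix (Fin N) (Fin N) ℂ) (B : Matrix (Fin N) (Fin M) ℂ)
    (p : ℕ → ℝ) : ℕ → Matrix (Fin N) (Fin M) ℂ
  | 0 => (Real.sqrt (2 * p 0) : ℂ) • ((A + (p 0 : ℂ) • 1)⁻¹ * B)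
  | k + 1 => (Real.sqrt (p (k + 1) / p k) : ℂ) •
      ((1 - ((p (k + 1) + p k : ℝ) : ℂ) • (A + (p (k + 1) : ℂ) • 1)⁻¹) * adiZ A B p k)

/-!
Every matrix built from `A` is `cfc g A` for a real function `g` (the spectrum of `A` is finite
and positive, so `g` may have poles at `-p_j`); hence all of them are Hermitian and commute with
each other. Writing `φ_k` for the product over the first `k` shifts and `Y_k = φ_k(A) X φ_k(A)`,
one gets `Z_k = √(2p_k) (A + p_k)⁻¹ φ_k(A) B`, so that
`Z_k Z_kᴴ = 2p_k (A + p_k)⁻¹ (A Y_k + Y_k A) (A + p_k)⁻¹`, and the identity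
`(A + p)Y(A + p) - 2p(AY + YA) = (A - p)Y(A - p)` gives `Y_k - Z_k Z_kᴴ = Y_{k+1}`; the sum
telescopes. For the bound, `‖φ(A)‖² = ‖φ(A)²‖ = max_{σ(A)} φ²` in the C⋆-algebra of matrices,
and `σ(A) ⊆ [λ_min, λ_max]`.
-/

open scoped Matrix.Norms.L2Operator

lemma sub_smul_lyapunov_eq_cayley_sandwich {K R : Type*} [CommRing K] [Ring R] [Algebra K R]
    {a u : R} {c : K} (hu : u * (a + c • 1) = 1) (hu' : (a + c • 1) * u = 1)
    (hau : Commute a u) (Y : R) :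
    Y - (2 * c) • (u * (a * Y + Y * a) * u) = (a - c • 1) * u * Y * ((a - c • 1) * u) := by
  have hexpand : (a + c • 1) * Y * (a + c • 1) - (2 * c) • (a * Y + Y * a)
      = (a - c • 1) * Y * (a - c • 1) := by
    simp only [add_mul, mul_add, sub_mul, mul_sub, smul_mul_assoc, mul_smul_comm, one_mul,
      mul_one, smul_smul, smul_add]
    module
  have hsu : Commute (a - c • 1) u := hau.sub_left ((Commute.one_left u).smul_left c)
  calc Y - (2 * c) • (u * (a * Y + Y * a) * u)
      = u * ((a + c • 1) * Y * (a + c • 1) - (2 * c) • (a * Y + Y * a)) * u := by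
        rw [mul_sub, sub_mul, mul_smul_comm, smul_mul_assoc]
        simp only [← mul_assoc, hu, one_mul]
        rw [mul_assoc Y, hu', mul_one]
    _ = (a - c • 1) * u * Y * ((a - c • 1) * u) := by
        rw [hexpand]
        simp only [mul_assoc]
        rw [hsu.symm.left_comm]

lemma IsCompact.le_biSup {X : Type*} [TopologicalSpace X] {s : Set X} {f : X → ℝ}
    (hs : IsCompact s) (hf : ContinuousOn f s) {x : X} (hx : x ∈ s) : f x ≤ ⨆ y ∈ s, f y :=
  le_ciSup₂ (f := fun y _ => f y)
    ((hs.bddAbove_image hf).mono (by rintro _ ⟨_, ⟨y, rfl⟩, hy, rfl⟩; exact ⟨y, hy, rfl⟩))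
    x hx

namespace Matrix

lemma of_blocks_mul_conjTranspose {𝕜 n m ι : Type*} [RCLike 𝕜] [Fintype m] [Fintype ι]
    (Z : ι → Matrix n m 𝕜) :
    (of fun (i : n) (kl : ι × m) => Z kl.1 i kl.2)
        * (of fun (i : n) (kl : ι × m) => Z kl.1 i kl.2)ᴴ
      = ∑ k, Z k * (Z k)ᴴ := by
  ext i j
  simp [mul_apply, sum_apply, Fintype.sum_prod_type]

section FunctionalCalculus

variable {n m : Type*} [Fintype n] [DecidableEq n] {A : Matrix n n ℂ}

lemma continuousOn_real_spectrum (f : ℝ → ℝ) : ContinuousOn f (spectrum ℝ A) :=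
  A.finite_real_spectrum.continuousOn f

lemma cfc_mul' (f g : ℝ → ℝ) : cfc (fun x => f x * g x) A = cfc f A * cfc g A :=
  cfc_mul f g A (continuousOn_real_spectrum f) (continuousOn_real_spectrum g)

lemma cfc_conjTranspose (f : ℝ → ℝ) : (cfc f A)ᴴ = cfc f A :=
  (cfc_predicate f A : IsSelfAdjoint _)

lemma IsHermitian.commute_cfc (hA : A.IsHermitian) (f : ℝ → ℝ) : Commute A (cfc f A) := by
  simpa only [cfc_id' ℝ A] using cfc_commute_cfc (fun x => x) f A

lemma IsHermitian.cfc_id_add_const (hA : A.IsHermitian) (c : ℝ) :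
    cfc (fun x => x + c) A = A + (c : ℂ) • 1 := by
  rw [_root_.cfc_add_const c _ A, cfc_id' ℝ A, Algebra.algebraMap_eq_smul_one, Complex.coe_smul]

lemma IsHermitian.cfc_id_sub_const (hA : A.IsHermitian) (c : ℝ) :
    cfc (fun x => x - c) A = A - (c : ℂ) • 1 := by
  simpa [sub_eq_add_neg] using hA.cfc_id_add_const (-c)

lemma IsHermitian.list_prod_map_cfc (hA : A.IsHermitian) {ι : Type*} (l : List ι)
    (f : ι → ℝ → ℝ) :
    (l.map fun i => cfc (f i) A).prod = cfc (fun x => (l.map fun i => f i x).prod) A := by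
  induction l with
  | nil => exact (cfc_const_one ℝ A).symm
  | cons i l ih => simp only [List.map_cons, List.prod_cons, ih, cfc_mul']

lemma IsHermitian.spectrum_subset_Icc (hA : A.IsHermitian) :
    spectrum ℝ A ⊆ Set.Icc (⨅ i, hA.eigenvalues i) (⨆ i, hA.eigenvalues i) := by
  rw [hA.spectrum_real_eq_range_eigenvalues]
  rintro _ ⟨i, rfl⟩
  exact ⟨ciInf_le (Finite.bddBelow_range _) i, le_ciSup (Finite.bddAbove_range _) i⟩

lemma PosDef.spectrum_pos (hA : A.PosDef) {x : ℝ} (hx : x ∈ spectrum ℝ A) : 0 < x := by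
  rw [hA.isHermitian.spectrum_real_eq_range_eigenvalues] at hx
  obtain ⟨i, rfl⟩ := hx
  exact hA.eigenvalues_pos i

lemma PosDef.iInf_eigenvalues_pos [Nonempty n] (hA : A.PosDef) :
    0 < ⨅ i, hA.isHermitian.eigenvalues i := by
  obtain ⟨i, hi⟩ := Finite.exists_min hA.isHermitian.eigenvalues
  exact (hA.eigenvalues_pos i).trans_le (le_ciInf hi)

lemma PosDef.cfc_inv_add_const_mul (hA : A.PosDef) {c : ℝ} (hc : 0 ≤ c) :
    cfc (fun x => (x + c)⁻¹) A * (A + (c : ℂ) • 1) = 1 := by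
  rw [← hA.isHermitian.cfc_id_add_const, ← cfc_mul', ← cfc_one ℝ A hA.isHermitian]
  refine cfc_congr fun x hx => ?_
  have := hA.spectrum_pos hx
  simp only [Pi.one_apply]
  field_simp

lemma PosDef.inv_add_smul_one (hA : A.PosDef) {c : ℝ} (hc : 0 ≤ c) :
    (A + (c : ℂ) • 1)⁻¹ = cfc (fun x => (x + c)⁻¹) A :=
  inv_eq_left_inv (hA.cfc_inv_add_const_mul hc)

lemma PosDef.cayley (hA : A.PosDef) {c : ℝ} (hc : 0 ≤ c) :
    (A - (c : ℂ) • 1) * (A + (c : ℂ) • 1)⁻¹ = cfc (fun x => (x - c) / (x + c)) A := by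
  simp only [div_eq_mul_inv]
  rw [hA.inv_add_smul_one hc, ← hA.isHermitian.cfc_id_sub_const, cfc_mul']

lemma norm_cfc_mul_mul_cfc_le (f : ℝ → ℝ) (X : Matrix n n ℂ) {S : ℝ} (hS0 : 0 ≤ S)
    (hS : ∀ x ∈ spectrum ℝ A, f x ^ 2 ≤ S) : ‖cfc f A * X * cfc f A‖ ≤ ‖X‖ * S :=
  calc ‖cfc f A * X * cfc f A‖ ≤ ‖cfc f A‖ * ‖X‖ * ‖cfc f A‖ := norm_mul₃_le
    _ = ‖X‖ * ‖cfc f A * cfc f A‖ := by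
        rw [(cfc_predicate f A : IsSelfAdjoint _).norm_mul_self]
        ring
    _ ≤ ‖X‖ * S := by
        gcongr
        rw [← cfc_mul']
        refine norm_cfc_le (a := A) hS0 fun x hx => ?_
        rw [Real.norm_eq_abs, abs_mul_self, ← sq]
        exact hS x hx

lemma PosDef.adi_step [Fintype m] (hA : A.PosDef) {c : ℝ} (hc : 0 ≤ c) (f : ℝ → ℝ)
    {X : Matrix n n ℂ} {G : Matrix n m ℂ} (hX : A * X + X * A = G * Gᴴ) :
    cfc f A * X * cfc f A
        - (cfc (fun x => √(2 * c) / (x + c) * f x) A * G)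
          * (cfc (fun x => √(2 * c) / (x + c) * f x) A * G)ᴴ
      = cfc (fun x => f x * ((x - c) / (x + c))) A * X
          * cfc (fun x => f x * ((x - c) / (x + c))) A := by
  set F := cfc f A
  set u := cfc (fun x => (x + c)⁻¹) A
  set H := cfc (fun x => √(2 * c) / (x + c) * f x) A
  set Y := F * X * F
  set s : ℂ := ((√(2 * c) : ℝ) : ℂ)
  have hH : H = s • (u * F) := by
    simp only [H, div_eq_mul_inv, mul_assoc]
    rw [cfc_const_mul _ _ A (continuousOn_real_spectrum _), cfc_mul', Complex.coe_smul]
  have huF : Commute u F := cfc_commute_cfc _ _ A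
  have hAF : Commute A F := hA.isHermitian.commute_cfc f
  have hss : s * s = 2 * (c : ℂ) := by
    rw [← Complex.ofReal_mul, Real.mul_self_sqrt (by positivity)]
    push_cast
    ring
  have hHH : (H * G) * (H * G)ᴴ = (2 * (c : ℂ)) • (u * (A * Y + Y * A) * u) := by
    have hFY : F * (A * X + X * A) * F = A * Y + Y * A := by
      simp only [Y, mul_add, add_mul, mul_assoc, hAF.eq, hAF.left_comm]
    calc (H * G) * (H * G)ᴴ = H * (A * X + X * A) * H := by
          rw [conjTranspose_mul, show Hᴴ = H from cfc_conjTranspose _, hX]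
          simp only [Matrix.mul_assoc]
      _ = (s * s) • (u * (F * (A * X + X * A) * F) * u) := by
          nth_rewrite 1 [hH]
          rw [show H = s • (F * u) by rw [hH, huF.eq]]
          simp only [smul_mul_assoc, mul_smul_comm, smul_smul, mul_assoc]
      _ = (2 * (c : ℂ)) • (u * (A * Y + Y * A) * u) := by rw [hss, hFY]
  have hu : u * (A + (c : ℂ) • 1) = 1 := hA.cfc_inv_add_const_mul hc
  have hAu : Commute A u := hA.isHermitian.commute_cfc _
  have hu' : (A + (c : ℂ) • 1) * u = 1 := by
    rw [← (hAu.symm.add_right ((Commute.one_right u).smul_right _)).eq, hu]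
  have hT : cfc (fun x => (x - c) / (x + c)) A = (A - (c : ℂ) • 1) * u := by
    rw [← hA.cayley hc, hA.inv_add_smul_one hc]
  have hTF : cfc (fun x => f x * ((x - c) / (x + c))) A
      = F * cfc (fun x => (x - c) / (x + c)) A := cfc_mul' _ _
  rw [hHH, sub_smul_lyapunov_eq_cayley_sandwich hu hu' hAu, ← hT, hTF]
  simp only [Y, mul_assoc]
  rw [(cfc_commute_cfc f (fun x => (x - c) / (x + c)) A).left_comm]

end FunctionalCalculus

end Matrix

noncomputable def adiPhi (p : ℕ → ℝ) (k : ℕ) (x : ℝ) : ℝ :=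
  ∏ j ∈ Finset.range k, (x - p j) / (x + p j)

lemma adiPhi_zero (p : ℕ → ℝ) : adiPhi p 0 = 1 := by
  funext x
  simp [adiPhi]

lemma adiPhi_succ (p : ℕ → ℝ) (k : ℕ) :
    adiPhi p (k + 1) = fun x => adiPhi p k x * ((x - p k) / (x + p k)) := by
  funext x
  exact Finset.prod_range_succ _ k

lemma continuousOn_adiPhi {p : ℕ → ℝ} {k : ℕ} (hp : ∀ j < k, 0 ≤ p j) :
    ContinuousOn (adiPhi p k) (Set.Ioi 0) := by
  refine continuousOn_finsetProd _ fun j hj => ?_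
  refine (continuousOn_id.sub continuousOn_const).div (continuousOn_id.add continuousOn_const) ?_
  intro x (hx : 0 < x)
  have := hp j (Finset.mem_range.mp hj)
  positivity

section ADI

variable {N M : ℕ} {A : Matrix (Fin N) (Fin N) ℂ} {p : ℕ → ℝ}

lemma adiZ_eq_cfc_mul (hA : A.PosDef) (B : Matrix (Fin N) (Fin M) ℂ) {k : ℕ}
    (hp : ∀ j ≤ k, 0 < p j) :
    adiZ A B p k = cfc (fun x => √(2 * p k) / (x + p k) * adiPhi p k x) A * B := by
  induction k with
  | zero =>
    have hfun : (fun x => √(2 * p 0) / (x + p 0) * adiPhi p 0 x)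
        = fun x => √(2 * p 0) * (x + p 0)⁻¹ := by
      funext x
      simp [adiPhi_zero, div_eq_mul_inv]
    rw [adiZ, hA.inv_add_smul_one (hp 0 le_rfl).le, hfun,
      cfc_const_mul _ _ A (continuousOn_real_spectrum _), Complex.coe_smul, Matrix.smul_mul]
  | succ k ih =>
    have hpk := hp k (by omega)
    have hpk1 := hp (k + 1) le_rfl
    have hsqrt : √(p (k + 1) / p k) * √(2 * p k) = √(2 * p (k + 1)) := by
      rw [← Real.sqrt_mul (by positivity)]
      congr 1
      field_simp
    have hfun : (spectrum ℝ A).EqOn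
        (fun x => √(2 * p (k + 1)) / (x + p (k + 1)) * adiPhi p (k + 1) x)
        (fun x => √(p (k + 1) / p k) * ((1 - (p (k + 1) + p k) * (x + p (k + 1))⁻¹)
          * (√(2 * p k) / (x + p k) * adiPhi p k x))) := by
      intro x hx
      have := hA.spectrum_pos hx
      rw [adiPhi_succ, ← hsqrt]
      field_simp
      ring
    have hcont := continuousOn_real_spectrum (A := A)
    rw [cfc_congr hfun, cfc_const_mul _ _ A (hcont _), cfc_mul', cfc_sub _ _ A (hcont _) (hcont _),
      cfc_const_one ℝ A hA.isHermitian.isSelfAdjoint, cfc_const_mul _ _ A (hcont _), adiZ,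
      ih fun j hj => hp j (by omega), hA.inv_add_smul_one hpk1.le, Complex.coe_smul,
      Complex.coe_smul, Matrix.smul_mul, Matrix.mul_assoc]

lemma adi_error_formula (hA : A.PosDef) {B : Matrix (Fin N) (Fin M) ℂ}
    {X : Matrix (Fin N) (Fin N) ℂ} (hX : A * X + X * A = B * Bᴴ) {r : ℕ}
    (hp : ∀ k < r, 0 < p k) :
    X - ∑ k ∈ Finset.range r, adiZ A B p k * (adiZ A B p k)ᴴ
      = cfc (adiPhi p r) A * X * cfc (adiPhi p r) A := by
  induction r with
  | zero => simp [adiPhi_zero, cfc_one ℝ A hA.isHermitian.isSelfAdjoint]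
  | succ r ih =>
    rw [Finset.sum_range_succ, ← sub_sub, ih fun k hk => hp k (by omega),
      adiZ_eq_cfc_mul hA B fun j hj => hp j (by omega),
      hA.adi_step (hp r (by omega)).le _ hX, adiPhi_succ]

lemma Matrix.PosDef.adiPhi_sq_le_iSup (hA : A.PosDef) {r : ℕ} (hp : ∀ j < r, 0 ≤ p j)
    {x : ℝ} (hx : x ∈ spectrum ℝ A) :
    adiPhi p r x ^ 2 ≤ ⨆ y ∈ Set.Icc (⨅ i, hA.isHermitian.eigenvalues i)
      (⨆ i, hA.isHermitian.eigenvalues i), |adiPhi p r y| ^ 2 := by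
  have : Nonempty (Fin N) := by
    rw [hA.isHermitian.spectrum_real_eq_range_eigenvalues] at hx
    exact ⟨hx.choose⟩
  rw [← sq_abs]
  refine isCompact_Icc.le_biSup (f := fun y => |adiPhi p r y| ^ 2) ?_
    (hA.isHermitian.spectrum_subset_Icc hx)
  exact (((continuousOn_adiPhi hp).mono
    fun y hy => hA.iInf_eigenvalues_pos.trans_le hy.1).abs).pow 2

end ADI

theorem stmt19_general {N M r : ℕ}
    (A : Matrix (Fin N) (Fin N) ℂ) (hA : A.IsHermitian) (hApd : A.PosDef)
    (B : Matrix (Fin N) (Fin M) ℂ)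
    (X : Matrix (Fin N) (Fin N) ℂ) (hX : A * X + X * Aᴴ = B * Bᴴ)
    (p : ℕ → ℝ) (hp : ∀ k, k < r → 0 < p k)
    (Z : Matrix (Fin N) (Fin r × Fin M) ℂ)
    (hZ : Z = Matrix.of fun i kl => adiZ A B p (kl.1 : ℕ) i kl.2)
    (φA : Matrix (Fin N) (Fin N) ℂ)
    (hφA : φA = ((List.finRange r).map
      (fun j => (A - (p (j : ℕ) : ℂ) • 1) * (A + (p (j : ℕ) : ℂ) • 1)⁻¹)).prod)
    (φ : ℝ → ℝ) (hφ : φ = fun x => ∏ j : Fin r, (x - p (j : ℕ)) / (x + p (j : ℕ))) :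
    X - Z * Zᴴ = φA * X * φAᴴ ∧
    opNorm (X - Z * Zᴴ) ≤ opNorm X *
      ⨆ x ∈ Set.Icc (⨅ i, hA.eigenvalues i) (⨆ i, hA.eigenvalues i), |φ x| ^ 2 := by
  obtain rfl : φ = adiPhi p r :=
    hφ ▸ funext fun x => Fin.prod_univ_eq_prod_range (fun j => (x - p j) / (x + p j)) r
  -- the coercion `(j : ℕ)` turns `List.finRange r` into a list of naturals inside `hφA`
  have hφA_eq : φA = cfc (adiPhi p r) A := by
    simp only [hφA, List.pure_def, List.bind_eq_flatMap, ← List.map_eq_flatMap, List.map_map,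
      Function.comp_def]
    rw [List.map_congr_left fun (j : Fin r) _ => hApd.cayley (hp j j.isLt).le,
      hA.list_prod_map_cfc]
    congr 1
    funext x
    rw [adiPhi, ← Fin.prod_univ_eq_prod_range, Fin.prod_univ_def]
  have hZZ : Z * Zᴴ = ∑ k ∈ Finset.range r, adiZ A B p k * (adiZ A B p k)ᴴ := by
    rw [hZ, of_blocks_mul_conjTranspose fun k : Fin r => adiZ A B p k]
    exact Fin.sum_univ_eq_sum_range (fun k => adiZ A B p k * (adiZ A B p k)ᴴ) r
  have herr : X - Z * Zᴴ = φA * X * φAᴴ := by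
    rw [hZZ, hφA_eq, cfc_conjTranspose, adi_error_formula hApd (by rwa [hA.eq] at hX) hp]
  refine ⟨herr, ?_⟩
  rw [herr, hφA_eq, cfc_conjTranspose]
  exact norm_cfc_mul_mul_cfc_le _ X
    (Real.iSup_nonneg fun x => Real.iSup_nonneg fun _ => sq_nonneg _)
    fun x hx => hApd.adiPhi_sq_le_iSup (fun j hj => (hp j hj).le) hx

/-- The ADI error formula: with `X` solving `AX + XAᴴ = BBᴴ`, positive shifts `p₁,…,p_r`,
`Z = [Z₁ ⋯ Z_r]` the concatenated CF-ADI factor, and `φ(x) = Π_j (x-p_j)/(x+p_j)`,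
one has `X - ZZᴴ = φ(A) X φ(A)ᴴ`, hence
`‖X - ZZᴴ‖ ≤ ‖X‖ · sup_{x ∈ [λ_min(A), λ_max(A)]} |φ(x)|²`. -/
theorem stmt19 {N M r : ℕ} (hN : 0 < N) (hr : 0 < r)
    (A : Matrix (Fin N) (Fin N) ℂ) (hA : A.IsHermitian) (hApd : A.PosDef)
    (B : Matrix (Fin N) (Fin M) ℂ)
    (X : Matrix (Fin N) (Fin N) ℂ) (hX : A * X + X * Aᴴ = B * Bᴴ)
    (p : ℕ → ℝ) (hp : ∀ k, k < r → 0 < p k)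
    (Z : Matrix (Fin N) (Fin r × Fin M) ℂ)
    (hZ : Z = Matrix.of fun i kl => adiZ A B p (kl.1 : ℕ) i kl.2)
    (φA : Matrix (Fin N) (Fin N) ℂ)
    (hφA : φA = ((List.finRange r).map
      (fun j => (A - (p (j : ℕ) : ℂ) • 1) * (A + (p (j : ℕ) : ℂ) • 1)⁻¹)).prod)
    (φ : ℝ → ℝ) (hφ : φ = fun x => ∏ j : Fin r, (x - p (j : ℕ)) / (x + p (j : ℕ))) :
    X - Z * Zᴴ = φA * X * φAᴴ ∧
    opNorm (X - Z * Zᴴ) ≤ opNorm X *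
      ⨆ x ∈ Set.Icc (⨅ i, hA.eigenvalues i) (⨆ i, hA.eigenvalues i), |φ x| ^ 2 :=
  stmt19_general A hA hApd B X hX p hp Z hZ φA hφA φ hφ
end
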